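/- arXiv:math/0507214 — 9 statements merged into one kernel-verified Lean document; each statement's English description precedes it below -/
import Mathlib

section
/- Let G be a finitely generated abelian group of positive rank, let p ∈ G be primitive in G/Tors(G), and let G' be a direct complement of ⟨p⟩ in G (so G = ⟨p⟩ ⊕ G'). Let I be the augmentation ideal of ℤ[G]. Then for every k ≥ 0, I^{k+1} = (p−1)·I^k + (I^{k+1} ∩ ℤ[G']). -/
open MonoidAlgebra

/-- The augmentation homomorphism of the group ring `ℤ[G]`. -/
noncomputable def aug (G : Type*) [Monoid G] : MonoidAlgebra ℤ G →+* ℤ :=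
  ((MonoidAlgebra.lift ℤ ℤ G) 1).toRingHom

/-- The augmentation ideal `I` of the group ring `ℤ[G]`. -/
noncomputable def augIdeal (G : Type*) [CommGroup G] : Ideal (MonoidAlgebra ℤ G) :=
  RingHom.ker (aug G)

namespace Stmt1Aux

variable {G : Type*} [CommGroup G]

lemma aug_apply (x : MonoidAlgebra ℤ G) : aug G x = x.coeff.sum fun _ c => c := by
  simp [aug, MonoidAlgebra.lift_apply]

lemma aug_of (g : G) : aug G (of ℤ G g) = 1 := by
  rw [aug_apply, MonoidAlgebra.of_apply]
  simp [Finsupp.sum_single_index]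

lemma of_sub_one_mem (g : G) : of ℤ G g - 1 ∈ augIdeal G := by
  rw [augIdeal, RingHom.mem_ker, map_sub, map_one, aug_of, sub_self]

lemma mem_span_of_mem (x : MonoidAlgebra ℤ G) (hx : x ∈ augIdeal G) :
    x ∈ Submodule.span ℤ {y : MonoidAlgebra ℤ G | ∃ g : G, of ℤ G g - 1 = y} := by
  have h0 : aug G x = 0 := hx
  have hx2 : x = x.coeff.sum fun g c => c • (of ℤ G g - 1) := by
    have h1 : (x.coeff.sum fun g c => c • (of ℤ G g - 1))
        = (x.coeff.sum fun g c => c • (of ℤ G g)) - x.coeff.sum fun g c => c • (1 : MonoidAlgebra ℤ G) := by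
      rw [← Finsupp.sum_sub]
      congr 1; ext g c; rw [smul_sub]
    have h2 : (x.coeff.sum fun g c => c • (of ℤ G g)) = x := by
      conv_rhs => rw [← x.sum_coeff_single]
      congr 1; ext g c
      simp [MonoidAlgebra.of_apply, Finsupp.smul_single]
    have h3 : (x.coeff.sum fun g c => c • (1 : MonoidAlgebra ℤ G)) = (aug G x) • 1 := by
      rw [aug_apply, Finsupp.sum, Finsupp.sum, Finset.sum_smul]
    rw [h1, h2, h3, h0, zero_smul, sub_zero]
  rw [hx2]
  exact Submodule.sum_mem _ fun g _ => Submodule.smul_mem _ _ (Submodule.subset_span ⟨g, rfl⟩)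

lemma zpow_sub_one_dvd (p : G) (n : ℤ) :
    ∃ u, of ℤ G (p ^ n) - 1 = (of ℤ G p - 1) * u := by
  have key : ∀ a b : G, ∀ u v : MonoidAlgebra ℤ G,
      of ℤ G a - 1 = (of ℤ G p - 1) * u → of ℤ G b - 1 = (of ℤ G p - 1) * v →
      of ℤ G (a * b) - 1 = (of ℤ G p - 1) * (of ℤ G a * v + u) := by
    intro a b u v hu hv
    have : of ℤ G (a * b) - 1 = of ℤ G a * (of ℤ G b - 1) + (of ℤ G a - 1) := by
      rw [map_mul]; ring
    rw [this, hu, hv]; ring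
  have inv : ∀ a : G, ∀ u : MonoidAlgebra ℤ G,
      of ℤ G a - 1 = (of ℤ G p - 1) * u →
      of ℤ G a⁻¹ - 1 = (of ℤ G p - 1) * (-(of ℤ G a⁻¹ * u)) := by
    intro a u hu
    have h1 : of ℤ G a⁻¹ * of ℤ G a = 1 := by rw [← map_mul, inv_mul_cancel, map_one]
    have : of ℤ G a⁻¹ - 1 = -(of ℤ G a⁻¹ * (of ℤ G a - 1)) := by
      rw [mul_sub, h1]; ring
    rw [this, hu]; ring
  induction n using Int.induction_on with
  | zero => exact ⟨0, by simp [MonoidAlgebra.one_def]⟩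
  | succ n ih =>
    obtain ⟨u, hu⟩ := ih
    refine ⟨of ℤ G (p ^ (n : ℤ)) * 1 + u, ?_⟩
    have := key (p ^ (n : ℤ)) p u 1 hu (by ring)
    rwa [← zpow_add_one] at this
  | pred n ih =>
    obtain ⟨u, hu⟩ := ih
    have h1 := inv p 1 (by ring)
    have := key (p ^ (-n : ℤ)) p⁻¹ u (-(of ℤ G p⁻¹ * 1)) hu h1
    refine ⟨of ℤ G (p ^ (-n : ℤ)) * -(of ℤ G p⁻¹ * 1) + u, ?_⟩
    rwa [← zpow_sub_one] at this

variable (G' : Subgroup G)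

noncomputable def f : MonoidAlgebra ℤ ↥G' →+* MonoidAlgebra ℤ G :=
  mapDomainRingHom ℤ G'.subtype

lemma aug_f (β : MonoidAlgebra ℤ ↥G') : aug G (f G' β) = aug ↥G' β := by
  rw [aug_apply, aug_apply]
  exact Finsupp.sum_mapDomain_index (fun _ => rfl) (fun _ _ _ => rfl)

lemma map_augIdeal_le : Ideal.map (f G') (augIdeal ↥G') ≤ augIdeal G := by
  rw [Ideal.map_le_iff_le_comap]
  intro β hβ
  have : aug ↥G' β = 0 := hβ
  simp only [Ideal.mem_comap, augIdeal, RingHom.mem_ker, aug_f, this]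

lemma f_pow_mem {m : ℕ} {β : MonoidAlgebra ℤ ↥G'} (hβ : β ∈ augIdeal ↥G' ^ m) :
    f G' β ∈ augIdeal G ^ m := by
  have h1 : f G' β ∈ Ideal.map (f G') (augIdeal ↥G' ^ m) := Ideal.mem_map_of_mem _ hβ
  rw [Ideal.map_pow] at h1
  exact Ideal.pow_right_mono (map_augIdeal_le G') m h1

noncomputable def M (k : ℕ) : Submodule ℤ (MonoidAlgebra ℤ G) :=
  Submodule.map (f G').toAddMonoidHom.toIntLinearMap
    ((augIdeal ↥G' ^ (k + 1)).restrictScalars ℤ)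

noncomputable def T (p : G) (k : ℕ) : Submodule ℤ (MonoidAlgebra ℤ G) :=
  (Ideal.span {of ℤ G p - 1} * augIdeal G ^ k).restrictScalars ℤ ⊔ M G' k

lemma claim0 (p : G) (hsup : Subgroup.zpowers p ⊔ G' = ⊤) :
    (augIdeal G).restrictScalars ℤ ≤ T G' p 0 := by
  intro x hx
  rw [Submodule.restrictScalars_mem] at hx
  refine Submodule.span_le.mpr ?_ (mem_span_of_mem x hx)
  rintro _ ⟨g, rfl⟩
  have hg : g ∈ Subgroup.zpowers p ⊔ G' := by rw [hsup]; trivial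
  obtain ⟨y, hy, z, hz, hyz⟩ := Subgroup.mem_sup.mp hg
  obtain ⟨n, rfl⟩ := hy
  have hyz' : p ^ n * z = g := hyz
  obtain ⟨u, hu⟩ := zpow_sub_one_dvd p n
  have h2 : of ℤ G g = of ℤ G z * of ℤ G (p ^ n) := by
    rw [← hyz', mul_comm, map_mul]
  have key : of ℤ G g - 1 = (of ℤ G p - 1) * (of ℤ G z * u) + (of ℤ G z - 1) := by
    calc of ℤ G g - 1 = of ℤ G z * (of ℤ G (p ^ n) - 1) + (of ℤ G z - 1) := by
          rw [h2]; ring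
      _ = _ := by rw [hu]; ring
  rw [key]
  refine Submodule.add_mem _ (Submodule.mem_sup_left ?_) (Submodule.mem_sup_right ?_)
  · rw [Submodule.restrictScalars_mem]
    exact Ideal.mem_span_singleton_mul.mpr ⟨of ℤ G z * u, by simp, rfl⟩
  · refine Submodule.mem_map.mpr ⟨of ℤ ↥G' ⟨z, hz⟩ - 1, ?_, ?_⟩
    · show (of ℤ ↥G' ⟨z, hz⟩ - 1) ∈ augIdeal ↥G' ^ (0 + 1)
      rw [pow_one]; exact of_sub_one_mem _
    · show f G' (of ℤ ↥G' ⟨z, hz⟩ - 1) = of ℤ G z - 1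
      simp only [map_sub, map_one]
      congr 1
      show MonoidAlgebra.mapDomain G'.subtype (MonoidAlgebra.single _ 1) = _
      rw [MonoidAlgebra.mapDomain_single]
      rfl

lemma claim (p : G) (hsup : Subgroup.zpowers p ⊔ G' = ⊤) (k : ℕ) :
    (augIdeal G ^ (k + 1)).restrictScalars ℤ ≤ T G' p k := by
  induction k with
  | zero =>
    intro x hx
    rw [Submodule.restrictScalars_mem, pow_one] at hx
    exact claim0 G' p hsup hx
  | succ k ih =>
    intro x hx
    rw [Submodule.restrictScalars_mem, pow_succ'] at hx
    refine Submodule.mul_induction_on hx ?_ (fun a b ha hb => Submodule.add_mem _ ha hb)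
    intro y hy z hz
    have hzT : z ∈ T G' p k := ih (by rwa [Submodule.restrictScalars_mem])
    have hyT : y ∈ T G' p 0 := claim0 G' p hsup hy
    obtain ⟨ya, hya, yb, hyb, hz'⟩ := Submodule.mem_sup.mp hzT
    obtain ⟨ca, hca, cb, hcb, hy'⟩ := Submodule.mem_sup.mp hyT
    rw [Submodule.restrictScalars_mem, Ideal.mem_span_singleton_mul] at hya hca
    obtain ⟨a, ha, rfl⟩ := hya
    obtain ⟨c, hc, rfl⟩ := hca
    obtain ⟨β, hβ, rfl⟩ := Submodule.mem_map.mp hyb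
    obtain ⟨β', hβ', rfl⟩ := Submodule.mem_map.mp hcb
    set π := of ℤ G p - 1
    set fb := (f G').toAddMonoidHom.toIntLinearMap β
    set fb' := (f G').toAddMonoidHom.toIntLinearMap β'
    have hfb : fb = f G' β := rfl
    have hfb' : fb' = f G' β' := rfl
    have hβm : β ∈ augIdeal ↥G' ^ (k + 1) := hβ
    have hβ'm : β' ∈ augIdeal ↥G' ^ 1 := hβ'
    have hcalc : y * z = π * (y * a + c * fb) + fb' * fb := by
      have h1 : y * fb = π * (c * fb) + fb' * fb := by rw [← hy']; ring
      rw [← hz', mul_add, ← mul_assoc y π a, mul_comm y π, mul_assoc, h1]; ring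
    rw [hcalc]
    refine Submodule.add_mem _ (Submodule.mem_sup_left ?_) (Submodule.mem_sup_right ?_)
    · rw [Submodule.restrictScalars_mem]
      refine Ideal.mem_span_singleton_mul.mpr ⟨y * a + c * fb, ?_, rfl⟩
      refine Ideal.add_mem _ ?_ ?_
      · rw [pow_succ']; exact Ideal.mul_mem_mul hy ha
      · exact Ideal.mul_mem_left _ c (f_pow_mem G' hβm)
    · refine Submodule.mem_map.mpr ⟨β' * β, ?_, ?_⟩
      · show β' * β ∈ augIdeal ↥G' ^ (k + 1 + 1)
        rw [pow_succ']
        exact Ideal.mul_mem_mul (by rwa [pow_one] at hβ'm) hβm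
      · show f G' (β' * β) = fb' * fb
        rw [map_mul, hfb, hfb']
end Stmt1Aux

/-- if `p ∈ G` generates an infinite cyclic direct summand of the
finitely generated abelian group `G`, with direct complement `G'`, and `I` is the
augmentation ideal of `ℤ[G]`, then `I^{k+1} = (p−1)·I^k + (I^{k+1} ∩ ℤ[G'])`,
where `ℤ[G']` is viewed inside `ℤ[G]` as the elements supported on `G'`. -/
theorem stmt1 (G : Type*) [CommGroup G] [Group.FG G]
    (p : G) (hp : ¬ IsOfFinOrder p)
    (G' : Subgroup G) (hcompl : IsCompl (Subgroup.zpowers p) G')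
    (k : ℕ) (x : MonoidAlgebra ℤ G) :
    x ∈ augIdeal G ^ (k + 1) ↔
      ∃ a ∈ augIdeal G ^ k, ∃ b ∈ augIdeal G ^ (k + 1),
        (∀ g ∈ b.coeff.support, g ∈ G') ∧
        x = (MonoidAlgebra.of ℤ G p - 1) * a + b := by
  constructor
  · intro hx
    have hsup : Subgroup.zpowers p ⊔ G' = ⊤ := codisjoint_iff.mp hcompl.codisjoint
    have hxT : x ∈ Stmt1Aux.T G' p k := Stmt1Aux.claim G' p hsup k hx
    obtain ⟨y, hy, b, hb, hx'⟩ := Submodule.mem_sup.mp hxT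
    rw [Submodule.restrictScalars_mem, Ideal.mem_span_singleton_mul] at hy
    obtain ⟨a, ha, rfl⟩ := hy
    obtain ⟨β, hβ, rfl⟩ := Submodule.mem_map.mp hb
    refine ⟨a, ha, Stmt1Aux.f G' β, Stmt1Aux.f_pow_mem G' hβ, ?_, hx'.symm⟩
    intro g hg
    classical
    have : g ∈ Finset.image G'.subtype β.coeff.support := Finsupp.mapDomain_support hg
    obtain ⟨w, _, rfl⟩ := Finset.mem_image.mp this
    exact SetLike.coe_mem w
  · rintro ⟨a, ha, b, hb, -, rfl⟩
    refine Ideal.add_mem _ ?_ hb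
    rw [pow_succ']
    exact Ideal.mul_mem_mul (Stmt1Aux.of_sub_one_mem p) ha
end

section
/- Let G be a finite cyclic group with generator p, and define κ : ℚ[G] → ℚ[G] by κ(x) = x − aug(x)·|G|^{-1}·Σ, where Σ is the sum of all group elements and aug is the augmentation. Let I be the augmentation ideal of ℤ[G]. Then for every x ∈ ℚ[G] and every k ≥ 0, if x·(p−1) ∈ I^{k+1} then κ(x) ∈ κ(I^k). -/
open MonoidAlgebra

/-- The augmentation homomorphism of the rational group algebra `ℚ[G]`. -/
noncomputable def augQ (G : Type*) [CommGroup G] : MonoidAlgebra ℚ G →+* ℚ :=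
  ((MonoidAlgebra.lift ℚ ℚ G) 1).toRingHom

/-- The inclusion `ℤ[G] → ℚ[G]`. -/
noncomputable def incZQ (G : Type*) [CommGroup G] :
    MonoidAlgebra ℤ G →+* MonoidAlgebra ℚ G :=
  ((MonoidAlgebra.lift ℤ (MonoidAlgebra ℚ G) G) (MonoidAlgebra.of ℚ G)).toRingHom

/-- Turaev's map `κ : ℚ[G] → ℚ[G]`, `κ(x) = x − aug(x)·|G|⁻¹·Σ`, where `Σ` is the
sum of all group elements. -/
noncomputable def kappa (G : Type*) [CommGroup G] [Fintype G] :
    MonoidAlgebra ℚ G → MonoidAlgebra ℚ G :=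
  fun x => x - (augQ G x / (Fintype.card G : ℚ)) • ∑ g : G, MonoidAlgebra.of ℚ G g

section Aux
variable (G : Type*) [CommGroup G]

lemma aug_eq_sum (f : MonoidAlgebra ℤ G) : aug G f = ∑ g ∈ f.coeff.support, f.coeff g := by
  simp [aug, MonoidAlgebra.lift_apply, Finsupp.sum]

lemma augIdeal_le_span [Fintype G] (p : G) (hp : ∀ g : G, g ∈ Subgroup.zpowers p) :
    augIdeal G ≤ Ideal.span {MonoidAlgebra.of ℤ G p - 1} := by
  intro f hf
  rw [augIdeal, RingHom.mem_ker] at hf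
  have hf' : f = ∑ g ∈ f.coeff.support, f.coeff g • (MonoidAlgebra.of ℤ G g - 1) := by
    have h1 : ∑ g ∈ f.coeff.support, f.coeff g • (MonoidAlgebra.of ℤ G g) = f := by
      conv_rhs => rw [← MonoidAlgebra.sum_coeff_single f]
      rw [Finsupp.sum]
      refine Finset.sum_congr rfl fun g _ => ?_
      rw [MonoidAlgebra.of_apply, MonoidAlgebra.smul_single, smul_eq_mul, mul_one]
    have h2 : ∑ g ∈ f.coeff.support, f.coeff g • (1 : MonoidAlgebra ℤ G) = 0 := by
      rw [← Finset.sum_smul, ← aug_eq_sum, hf, zero_smul]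
    simp only [smul_sub, Finset.sum_sub_distrib, h1, h2, sub_zero]
  rw [hf']
  refine Ideal.sum_mem _ fun g _ => ?_
  rw [zsmul_eq_mul]
  refine Ideal.mul_mem_left _ _ (Ideal.mem_span_singleton.mpr ?_)
  obtain ⟨m, hm⟩ := (isOfFinOrder_of_finite p).mem_powers_iff_mem_zpowers.mpr (hp g)
  simp only at hm
  have := sub_dvd_pow_sub_pow (MonoidAlgebra.of ℤ G p) 1 m
  rw [one_pow, ← map_pow, hm] at this
  exact this

lemma incZQ_of (g : G) : incZQ G (MonoidAlgebra.of ℤ G g) = MonoidAlgebra.of ℚ G g := by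
  simp [incZQ, MonoidAlgebra.lift_single]

lemma augQ_of (g : G) : augQ G (MonoidAlgebra.of ℚ G g) = 1 := by
  simp [augQ, MonoidAlgebra.lift_single]

lemma augQ_smul (c : ℚ) (v : MonoidAlgebra ℚ G) : augQ G (c • v) = c * augQ G v := by
  simp [augQ, smul_eq_mul]

lemma ann_sub_one [Fintype G] (p : G) (hp : ∀ g : G, g ∈ Subgroup.zpowers p)
    (w : MonoidAlgebra ℚ G) (hw : w * (MonoidAlgebra.of ℚ G p - 1) = 0) :
    w = w.coeff 1 • ∑ g : G, MonoidAlgebra.of ℚ G g := by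
  have hmul : w * MonoidAlgebra.of ℚ G p = w := by
    rw [mul_sub, mul_one, sub_eq_zero] at hw
    exact hw
  have key : ∀ g : G, w.coeff g = w.coeff (g * p⁻¹) := by
    intro g
    conv_lhs => rw [← hmul]
    rw [MonoidAlgebra.of_apply, MonoidAlgebra.coeff_mul_single_apply, mul_one]
  have hpow : ∀ m : ℕ, w.coeff (p ^ m) = w.coeff 1 := by
    intro m
    induction m with
    | zero => simp
    | succ m ih =>
      have h := key (p ^ (m+1))
      rw [pow_succ, mul_inv_cancel_right] at h
      rw [pow_succ, h, ih]
  ext g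
  obtain ⟨m, hm⟩ := (isOfFinOrder_of_finite p).mem_powers_iff_mem_zpowers.mpr (hp g)
  simp only at hm
  have hl : w.coeff g = w.coeff 1 := by rw [← hm, hpow]
  rw [hl, MonoidAlgebra.coeff_smul, Finsupp.smul_apply, MonoidAlgebra.coeff_sum, Finsupp.finset_sum_apply]
  simp [MonoidAlgebra.of_apply, Finsupp.single_apply]

lemma kappa_add_smul_sum [Fintype G] (z : MonoidAlgebra ℚ G) (c : ℚ) :
    kappa G (z + c • ∑ g : G, MonoidAlgebra.of ℚ G g) = kappa G z := by
  have hn : (Fintype.card G : ℚ) ≠ 0 := by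
    exact_mod_cast Fintype.card_ne_zero
  have hSig : augQ G (∑ g : G, MonoidAlgebra.of ℚ G g) = (Fintype.card G : ℚ) := by
    rw [map_sum]
    simp only [augQ_of]
    rw [Finset.sum_const, Finset.card_univ, nsmul_eq_mul, mul_one]
  unfold kappa
  rw [map_add, augQ_smul, hSig]
  have hs : (augQ G z + c * (Fintype.card G : ℚ)) / (Fintype.card G : ℚ)
      = augQ G z / (Fintype.card G : ℚ) + c := by field_simp
  rw [hs, add_smul]
  abel

end Aux

/-- for a finite cyclic group `G` with generator `p`, with
`κ(x) = x − aug(x)·|G|⁻¹·Σ` and `I` the augmentation ideal of `ℤ[G]` viewed inside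
`ℚ[G]`: for every `x ∈ ℚ[G]` and `k ≥ 0`, if `x·(p−1) ∈ I^{k+1}` then
`κ(x) ∈ κ(I^k)`. -/
theorem stmt3 (G : Type*) [CommGroup G] [Fintype G]
    (p : G) (hp : ∀ g : G, g ∈ Subgroup.zpowers p)
    (x : MonoidAlgebra ℚ G) (k : ℕ)
    (hx : x * (MonoidAlgebra.of ℚ G p - 1) ∈
      incZQ G '' ((augIdeal G ^ (k + 1) : Ideal (MonoidAlgebra ℤ G)) : Set (MonoidAlgebra ℤ G))) :
    kappa G x ∈ kappa G '' (incZQ G '' ((augIdeal G ^ k : Ideal (MonoidAlgebra ℤ G)) : Set (MonoidAlgebra ℤ G))) := by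
  obtain ⟨z, hz, hzx⟩ := hx
  have hz' : z ∈ Ideal.span {MonoidAlgebra.of ℤ G p - 1} ^ (k+1) :=
    Ideal.pow_right_mono (augIdeal_le_span G p hp) (k+1) hz
  rw [Ideal.span_singleton_pow, Ideal.mem_span_singleton] at hz'
  obtain ⟨y, hy⟩ := hz'
  set π : MonoidAlgebra ℤ G := MonoidAlgebra.of ℤ G p - 1 with hπdef
  set πQ : MonoidAlgebra ℚ G := MonoidAlgebra.of ℚ G p - 1 with hπQdef
  have hπQ : incZQ G π = πQ := by
    rw [hπdef, hπQdef, map_sub, map_one, incZQ_of]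
  have hxπ : x * πQ = πQ ^ (k+1) * incZQ G y := by
    rw [← hzx, hy, map_mul, map_pow, hπQ]
  have hw : (x - πQ ^ k * incZQ G y) * πQ = 0 := by
    rw [sub_mul, hxπ]; ring
  have hann := ann_sub_one G p hp _ hw
  have hxeq : x = πQ ^ k * incZQ G y
      + ((x - πQ ^ k * incZQ G y).coeff 1) • ∑ g : G, MonoidAlgebra.of ℚ G g := by
    rw [← hann]; ring
  have hπmem : π ∈ augIdeal G := by
    rw [augIdeal, RingHom.mem_ker, hπdef, map_sub, map_one]
    simp [aug, MonoidAlgebra.lift_single]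
  refine ⟨incZQ G (π ^ k * y), ⟨π ^ k * y,
    Ideal.mul_mem_right y _ (Ideal.pow_mem_pow hπmem k), rfl⟩, ?_⟩
  rw [map_mul, map_pow, hπQ]
  conv_rhs => rw [hxeq]
  rw [kappa_add_smul_sum]
end

section
/- Let G be a finite abelian group and let z : G → ℚ be a function such that for all x, y ∈ G one has Σ_{g} z(g)·g·(x−1)·(y−1) = 0 in ℚ[G] (i.e., the element Σ_g z(g)·g of ℚ[G] is annihilated by (x−1)(y−1) for all x, y ∈ G). Then z is constant; consequently, if moreover Σ_{g∈G} z(g) = 0, then z is identically zero. -/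
open MonoidAlgebra

/-- let `G` be a finite abelian group and `z : G → ℚ` a function such
that the element `u = Σ_g z(g)·g` of `ℚ[G]` satisfies `u·(x−1)·(y−1) = 0` for all
`x, y ∈ G`. Then `z` is constant; consequently, if moreover `Σ_g z(g) = 0`, then
`z` is identically zero. -/
theorem stmt5 (G : Type*) [CommGroup G] [Fintype G] (z : G → ℚ)
    (h : ∀ x y : G,
      (∑ g : G, z g • MonoidAlgebra.of ℚ G g) *
        (MonoidAlgebra.of ℚ G x - 1) * (MonoidAlgebra.of ℚ G y - 1) = 0) :
    (∀ g g' : G, z g = z g') ∧ ((∑ g : G, z g) = 0 → ∀ g : G, z g = 0) := by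
  set u : MonoidAlgebra ℚ G := ∑ g : G, z g • MonoidAlgebra.of ℚ G g with hu_def
  have hu : ∀ a : G, u.coeff a = z a := by
    intro a
    classical
    rw [hu_def, MonoidAlgebra.coeff_sum, Finsupp.finset_sum_apply]
    simp [MonoidAlgebra.of_apply, MonoidAlgebra.coeff_smul, MonoidAlgebra.coeff_single, Finsupp.single_apply]
  have key : ∀ x y : G, z (x * y) = z x + z y - z 1 := by
    intro x y
    have hexp : u * MonoidAlgebra.single (x * y) (1:ℚ) - u * MonoidAlgebra.single x (1:ℚ)
        - u * MonoidAlgebra.single y (1:ℚ) + u = 0 := by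
      have h0 := h x y
      have hxy : MonoidAlgebra.single (x * y) (1:ℚ)
          = MonoidAlgebra.single x (1:ℚ) * MonoidAlgebra.single y (1:ℚ) := by
        rw [MonoidAlgebra.single_mul_single, one_mul]
      rw [hxy]
      rw [MonoidAlgebra.of_apply, MonoidAlgebra.of_apply] at h0
      ring_nf
      ring_nf at h0
      convert h0 using 2 <;> ring
    let F : MonoidAlgebra ℚ G →+ ℚ :=
      { toFun := fun f => f.coeff (x * y), map_zero' := by rw [MonoidAlgebra.coeff_zero]; rfl,
        map_add' := fun a b => by rw [MonoidAlgebra.coeff_add]; rfl }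
    have := congrArg F hexp
    rw [map_zero, map_add, map_sub, map_sub] at this
    simp only [F, AddMonoidHom.coe_mk, ZeroHom.coe_mk, MonoidAlgebra.mul_single_apply,
      mul_one, hu] at this
    have e1 : x * y * (x * y)⁻¹ = 1 := mul_inv_cancel _
    have e2 : x * y * x⁻¹ = y := by simp [mul_comm x y]
    have e3 : x * y * y⁻¹ = x := by simp
    rw [e1, e2, e3] at this
    linarith
  have hpow : ∀ (x : G) (n : ℕ), z (x ^ n) - z 1 = n * (z x - z 1) := by
    intro x n
    induction n with
    | zero => simp
    | succ n ih =>
      rw [pow_succ, key]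
      push_cast
      linarith
  have hcard : (Fintype.card G : ℚ) ≠ 0 := by
    exact_mod_cast Fintype.card_ne_zero
  have hconst : ∀ g : G, z g = z 1 := by
    intro g
    have h1 : z (g ^ Fintype.card G) - z 1 = (Fintype.card G : ℚ) * (z g - z 1) :=
      hpow g _
    rw [pow_card_eq_one] at h1
    have : (Fintype.card G : ℚ) * (z g - z 1) = 0 := by linarith
    rcases mul_eq_zero.mp this with h' | h'
    · exact absurd h' hcard
    · linarith
  refine ⟨fun g g' => by rw [hconst g, hconst g'], fun hsum g => ?_⟩
  have : (∑ g : G, z g) = (Fintype.card G : ℚ) * z 1 := by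
    rw [Finset.sum_congr rfl fun g _ => hconst g, Finset.sum_const, Finset.card_univ,
      nsmul_eq_mul]
  rw [this] at hsum
  rcases mul_eq_zero.mp hsum with h' | h'
  · exact absurd h' hcard
  · rw [hconst g, h']
end

section
/- Let L be a finitely generated free abelian group and k ≥ 0. The map φ_k : L → S^k(L) into the k-th symmetric power, defined by l ↦ l^k, is polynomial of degree ≤ k: its linear extension ℤ[L] → S^k(L) vanishes on I^{k+1}, where I is the augmentation ideal of ℤ[L]. -/
open MonoidAlgebra Pointwise

/-- The free abelian group of rank `n`, written multiplicatively. -/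
abbrev FreeAb (n : ℕ) : Type := Multiplicative (Fin n → ℤ)

/-- The element of the symmetric algebra `S(L) = ℤ[X₁,…,Xₙ]` (degree-one part)
corresponding to an element `l` of the free abelian group `L` of rank `n`. -/
noncomputable def lin (n : ℕ) (l : FreeAb n) : MvPolynomial (Fin n) ℤ :=
  ∑ i : Fin n, (Multiplicative.toAdd l i) • MvPolynomial.X i

lemma key_diff {R : Type*} [CommRing R] {ι : Type*} [DecidableEq ι] :
    ∀ (k : ℕ) (s : Finset ι) (a : R) (b : ι → R), k < s.card →
      ∑ t ∈ s.powerset, (-1 : R) ^ (s.card - t.card) * (a + ∑ i ∈ t, b i) ^ k = 0 := by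
  intro k
  induction k using Nat.strong_induction_on with
  | _ k IH =>
    intro s a b hk
    obtain ⟨j, hj⟩ : s.Nonempty := Finset.card_pos.mp (Nat.pos_of_ne_zero (by omega))
    set s' := s.erase j with hs'
    have hj' : j ∉ s' := Finset.notMem_erase j s
    have hins : insert j s' = s := Finset.insert_erase hj
    have hcard : s.card = s'.card + 1 := by
      rw [← hins, Finset.card_insert_of_notMem hj']
    have hk' : k ≤ s'.card := by omega
    rw [← hins, Finset.sum_powerset_insert hj']
    have step : ∀ t ∈ s'.powerset,
        (-1 : R) ^ ((insert j s').card - t.card) * (a + ∑ i ∈ t, b i) ^ k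
          + (-1 : R) ^ ((insert j s').card - (insert j t).card) * (a + ∑ i ∈ insert j t, b i) ^ k
        = ∑ m ∈ Finset.range k,
            (-1 : R) ^ (s'.card - t.card) *
              ((a + ∑ i ∈ t, b i) ^ m * (b j) ^ (k - m) * (k.choose m : R)) := by
      intro t ht
      rw [Finset.mem_powerset] at ht
      have htj : j ∉ t := fun h => hj' (ht h)
      have htc : t.card ≤ s'.card := Finset.card_le_card ht
      rw [Finset.card_insert_of_notMem hj', Finset.card_insert_of_notMem htj,
        Finset.sum_insert htj]
      have h1 : s'.card + 1 - t.card = (s'.card - t.card) + 1 := by omega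
      have h2 : s'.card + 1 - (t.card + 1) = s'.card - t.card := by omega
      rw [h1, h2, pow_succ]
      have hbin : (b j + (a + ∑ i ∈ t, b i)) ^ k
          = ∑ m ∈ Finset.range (k + 1),
              (a + ∑ i ∈ t, b i) ^ m * (b j) ^ (k - m) * (k.choose m : R) := by
        rw [add_comm (b j), add_pow]
      rw [show a + (b j + ∑ i ∈ t, b i) = b j + (a + ∑ i ∈ t, b i) by ring, hbin,
        Finset.sum_range_succ, Nat.choose_self, Nat.sub_self, pow_zero]
      rw [mul_add, Finset.mul_sum]
      ring
    rw [← Finset.sum_add_distrib, Finset.sum_congr rfl step, Finset.sum_comm]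
    apply Finset.sum_eq_zero
    intro m hm
    rw [Finset.mem_range] at hm
    have : ∑ t ∈ s'.powerset,
        (-1 : R) ^ (s'.card - t.card) *
          ((a + ∑ i ∈ t, b i) ^ m * (b j) ^ (k - m) * (k.choose m : R))
      = (∑ t ∈ s'.powerset, (-1 : R) ^ (s'.card - t.card) * (a + ∑ i ∈ t, b i) ^ m)
          * ((b j) ^ (k - m) * (k.choose m : R)) := by
      rw [Finset.sum_mul]
      exact Finset.sum_congr rfl fun t _ => by ring
    rw [this, IH m hm s' a b (by omega), zero_mul]

lemma lin_mul (n : ℕ) (x y : FreeAb n) : lin n (x * y) = lin n x + lin n y := by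
  unfold lin
  rw [← Finset.sum_add_distrib]
  refine Finset.sum_congr rfl fun i _ => ?_
  have : Multiplicative.toAdd (x * y) i = Multiplicative.toAdd x i + Multiplicative.toAdd y i :=
    rfl
  rw [this, add_smul]

lemma lin_one (n : ℕ) : lin n 1 = 0 := by
  unfold lin
  refine Finset.sum_eq_zero fun i _ => ?_
  have : Multiplicative.toAdd (1 : FreeAb n) i = 0 := rfl
  rw [this, zero_smul]

lemma lin_prod (n : ℕ) {ι : Type*} (t : Finset ι) (l : ι → FreeAb n) :
    lin n (∏ i ∈ t, l i) = ∑ i ∈ t, lin n (l i) := by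
  classical
  induction t using Finset.cons_induction with
  | empty => simpa using lin_one n
  | cons j t hj IH =>
    rw [Finset.prod_cons, Finset.sum_cons, lin_mul, IH]

/-- generators for the span containing `I^m`. -/
def genSet (n m : ℕ) : Set (MonoidAlgebra ℤ (FreeAb n)) :=
  {x | ∃ (g : FreeAb n) (l : Fin m → FreeAb n),
    x = MonoidAlgebra.of ℤ (FreeAb n) g * ∏ i, (MonoidAlgebra.of ℤ (FreeAb n) (l i) - 1)}

lemma aug_apply (n : ℕ) (x : MonoidAlgebra ℤ (FreeAb n)) :
    aug (FreeAb n) x = ∑ g ∈ x.coeff.support, x.coeff g := by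
  simp [aug, MonoidAlgebra.lift_apply, Finsupp.sum]

lemma mem_span_gen_one (n : ℕ) (x : MonoidAlgebra ℤ (FreeAb n))
    (hx : x ∈ augIdeal (FreeAb n)) : x ∈ Submodule.span ℤ (genSet n 1) := by
  rw [augIdeal, RingHom.mem_ker] at hx
  have h1 : ∑ g ∈ x.coeff.support, x.coeff g • (MonoidAlgebra.of ℤ (FreeAb n) g) = x := by
    have h := MonoidAlgebra.sum_coeff_single x
    rw [Finsupp.sum] at h
    simpa [MonoidAlgebra.of_apply, MonoidAlgebra.smul_single] using h
  have h2 : ∑ g ∈ x.coeff.support, x.coeff g • (1 : MonoidAlgebra ℤ (FreeAb n)) = 0 := by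
    rw [← Finset.sum_smul]
    have : ∑ g ∈ x.coeff.support, x.coeff g = 0 := by rw [← aug_apply n x, hx]
    rw [this, zero_smul]
  have hrep : x = ∑ g ∈ x.coeff.support, x.coeff g • (MonoidAlgebra.of ℤ (FreeAb n) g - 1) := by
    simp only [smul_sub]
    rw [Finset.sum_sub_distrib, h1, h2, sub_zero]
  rw [hrep]
  refine Submodule.sum_mem _ fun g _ => Submodule.smul_mem _ _ (Submodule.subset_span ?_)
  exact ⟨1, fun _ => g, by simp [← MonoidAlgebra.one_def]⟩

lemma gen_mul_gen (n m : ℕ) : genSet n (m + 1) * genSet n 1 ⊆ genSet n (m + 2) := by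
  rintro _ ⟨_, ⟨g, l, rfl⟩, _, ⟨g', l', rfl⟩, rfl⟩
  refine ⟨g * g', Fin.snoc l (l' 0), ?_⟩
  have hpr : ∏ i : Fin (m + 2), (MonoidAlgebra.of ℤ (FreeAb n) ((Fin.snoc l (l' 0) : Fin (m + 2) → FreeAb n) i) - 1)
      = (∏ i : Fin (m + 1), (MonoidAlgebra.of ℤ (FreeAb n) (l i) - 1))
          * (MonoidAlgebra.of ℤ (FreeAb n) (l' 0) - 1) := by
    rw [Fin.prod_univ_castSucc]
    simp [Fin.snoc_castSucc, Fin.snoc_last]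
  rw [hpr, map_mul, Fin.prod_univ_one]
  ring

lemma mem_span_gen (n : ℕ) : ∀ (m : ℕ) (x : MonoidAlgebra ℤ (FreeAb n)),
    x ∈ augIdeal (FreeAb n) ^ (m + 1) → x ∈ Submodule.span ℤ (genSet n (m + 1)) := by
  intro m
  induction m with
  | zero =>
    intro x hx
    exact mem_span_gen_one n x (by rwa [pow_one] at hx)
  | succ m IH =>
    intro x hx
    rw [pow_succ] at hx
    refine Submodule.mul_induction_on hx (fun a ha b hb => ?_)
      (fun y z hy hz => Submodule.add_mem _ hy hz)
    have ha' := IH a ha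
    have hb' := mem_span_gen_one n b hb
    have : a * b ∈ Submodule.span ℤ (genSet n (m + 1)) * Submodule.span ℤ (genSet n 1) :=
      Submodule.mul_mem_mul ha' hb'
    rw [Submodule.span_mul_span] at this
    exact Submodule.span_mono (gen_mul_gen n m) this

lemma phi_gen_zero (n k : ℕ) (g : FreeAb n) (l : Fin (k + 1) → FreeAb n) :
    (Finsupp.lift (MvPolynomial (Fin n) ℤ) ℤ (FreeAb n) (fun l => lin n l ^ k))
      (MonoidAlgebra.of ℤ (FreeAb n) g * ∏ i, (MonoidAlgebra.of ℤ (FreeAb n) (l i) - 1)).coeff = 0 := by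
  classical
  have hexp : MonoidAlgebra.of ℤ (FreeAb n) g * ∏ i, (MonoidAlgebra.of ℤ (FreeAb n) (l i) - 1)
      = ∑ t ∈ (Finset.univ : Finset (Fin (k + 1))).powerset,
          ((-1 : ℤ) ^ ((Finset.univ : Finset (Fin (k + 1))).card - t.card)) •
            MonoidAlgebra.of ℤ (FreeAb n) (g * ∏ i ∈ t, l i) := by
    have : ∀ i : Fin (k + 1), MonoidAlgebra.of ℤ (FreeAb n) (l i) - 1
        = MonoidAlgebra.of ℤ (FreeAb n) (l i) + (-1) := by intro i; ring
    rw [Finset.prod_congr rfl fun i _ => this i, Finset.prod_add, Finset.mul_sum]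
    refine Finset.sum_congr rfl fun t ht => ?_
    rw [Finset.mem_powerset] at ht
    rw [Finset.prod_const, Finset.card_sdiff_of_subset ht, ← map_prod, zsmul_eq_mul, map_mul]
    push_cast
    ring
  rw [hexp, MonoidAlgebra.coeff_sum, map_sum]
  have hof : ∀ h : FreeAb n,
      (Finsupp.lift (MvPolynomial (Fin n) ℤ) ℤ (FreeAb n) (fun l => lin n l ^ k))
        (MonoidAlgebra.of ℤ (FreeAb n) h).coeff = lin n h ^ k := by
    intro h
    simp [MonoidAlgebra.of_apply, MonoidAlgebra.coeff_single, Finsupp.sum_single_index]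
  have := key_diff k (Finset.univ : Finset (Fin (k + 1))) (lin n g) (fun i => lin n (l i))
    (by simp)
  rw [← this]
  refine Finset.sum_congr rfl fun t ht => ?_
  rw [MonoidAlgebra.coeff_smul, map_zsmul, hof, lin_mul, lin_prod, zsmul_eq_mul]
  push_cast
  ring

/-- for a finitely generated free abelian group `L` (of rank `n`) and
`k ≥ 0`, the map `φ_k : L → S^k(L)`, `l ↦ l^k`, is polynomial of degree `≤ k`:
its `ℤ`-linear extension `ℤ[L] → S^k(L)` vanishes on `I^{k+1}`, where `I` is the
augmentation ideal of `ℤ[L]`. Here `S(L)` is identified with `ℤ[X₁,…,Xₙ]`. -/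
theorem stmt9 (n k : ℕ) (x : MonoidAlgebra ℤ (FreeAb n))
    (hx : x ∈ augIdeal (FreeAb n) ^ (k + 1)) :
    (Finsupp.lift (MvPolynomial (Fin n) ℤ) ℤ (FreeAb n) (fun l => lin n l ^ k)) x.coeff = 0 := by
  have hx' := mem_span_gen n k x hx
  refine Submodule.span_induction (p := fun y _ =>
      (Finsupp.lift (MvPolynomial (Fin n) ℤ) ℤ (FreeAb n) (fun l => lin n l ^ k)) y.coeff = 0)
    ?_ (by rw [MonoidAlgebra.coeff_zero, map_zero]) (fun a b _ _ ha hb => ?_) (fun c a _ ha => ?_) hx'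
  case refine_2 =>
    have ha' : (Finsupp.lift (MvPolynomial (Fin n) ℤ) ℤ (FreeAb n) (fun l => lin n l ^ k)) a.coeff = 0 :=
      ha
    have hb' : (Finsupp.lift (MvPolynomial (Fin n) ℤ) ℤ (FreeAb n) (fun l => lin n l ^ k)) b.coeff = 0 :=
      hb
    show (Finsupp.lift (MvPolynomial (Fin n) ℤ) ℤ (FreeAb n) (fun l => lin n l ^ k)) (a + b).coeff = 0
    rw [MonoidAlgebra.coeff_add, map_add, ha', hb', add_zero]
  case refine_3 =>
    have ha' : (Finsupp.lift (MvPolynomial (Fin n) ℤ) ℤ (FreeAb n) (fun l => lin n l ^ k)) a.coeff = 0 :=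
      ha
    show (Finsupp.lift (MvPolynomial (Fin n) ℤ) ℤ (FreeAb n) (fun l => lin n l ^ k)) (c • a).coeff = 0
    rw [MonoidAlgebra.coeff_smul, map_smul, ha', smul_zero]
  rintro y ⟨g, l, rfl⟩
  exact phi_gen_zero n k g l
end

section
/- Let L be a finitely generated free abelian group, I the augmentation ideal of ℤ[L], and k ≥ 0. The homomorphism q_k : S^k(L) → I^k/I^{k+1} defined by l₁⋯l_k ↦ [(l₁−1)⋯(l_k−1)] is a well-defined surjective group homomorphism, and the induced map φ_k : I^k/I^{k+1} → S^k(L) (from the linear extension of l ↦ l^k) satisfies φ_k([(l₁−1)⋯(l_k−1)]) = k!·(l₁⋯l_k) for all l₁,…,l_k ∈ L, so that φ_k ∘ q_k = k!·Id. -/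
open MonoidAlgebra

/-- The quotient `I^k/I^{k+1}` for the augmentation ideal of `ℤ[L]`, `L` free
abelian of rank `n`. -/
noncomputable abbrev IQuot (n k : ℕ) : Type :=
  ↥(augIdeal (FreeAb n) ^ k) ⧸
    (Submodule.comap (augIdeal (FreeAb n) ^ k).subtype (augIdeal (FreeAb n) ^ (k + 1)))

/-- The `k`-th symmetric power `S^k(L)` of the free abelian group of rank `n`,
realized as the homogeneous degree-`k` part of `ℤ[X₁,…,Xₙ]`. -/
noncomputable abbrev SymPow (n k : ℕ) : Type :=
  ↥(MvPolynomial.homogeneousSubmodule (Fin n) ℤ k)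

namespace Stmt10Aux

open Polynomial Finset

variable {R : Type*} [CommRing R]

lemma hasse_eval_of_le (p : R[X]) {m : ℕ} (hm : p.natDegree ≤ m) (b : R) :
    (p.hasseDeriv m).eval b = p.coeff m := by
  have h0 : p.hasseDeriv m = C (p.coeff m) := by
    ext j
    rcases Nat.eq_zero_or_pos j with rfl | hj
    · simp [Polynomial.hasseDeriv_coeff]
    · rw [Polynomial.hasseDeriv_coeff, Polynomial.coeff_C, if_neg hj.ne']
      have : p.coeff (j + m) = 0 :=
        Polynomial.coeff_eq_zero_of_natDegree_lt (by omega)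
      simp [this]
  rw [h0, eval_C]

lemma comp_coeff (p : R[X]) (b : R) (m : ℕ) :
    (p.comp (X + C b)).coeff m = (p.hasseDeriv m).eval b := by
  rw [← Polynomial.taylor_apply, Polynomial.taylor_coeff]

lemma q_deg (p : R[X]) (b : R) {m : ℕ} (hp : p.natDegree ≤ m + 1) :
    (p.comp (X + C b) - p).natDegree ≤ m := by
  rw [Polynomial.natDegree_le_iff_coeff_eq_zero]
  intro j hj
  rw [Polynomial.coeff_sub, comp_coeff, hasse_eval_of_le p (by omega) b, sub_self]

lemma q_coeff (p : R[X]) (b : R) (m : ℕ) (hp : p.natDegree ≤ m + 1) :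
    (p.comp (X + C b) - p).coeff m = ((m : R) + 1) * p.coeff (m + 1) * b := by
  have hdeg : (p.hasseDeriv m).natDegree ≤ 1 :=
    le_trans (Polynomial.natDegree_hasseDeriv_le p m) (by omega)
  rw [Polynomial.coeff_sub, comp_coeff p b m]
  conv_lhs => rw [Polynomial.eq_X_add_C_of_natDegree_le_one hdeg]
  rw [Polynomial.hasseDeriv_coeff, Polynomial.hasseDeriv_coeff]
  simp only [Polynomial.eval_add, Polynomial.eval_mul, Polynomial.eval_C, Polynomial.eval_X]
  have c1 : (1 + m).choose m = m + 1 := by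
    rw [Nat.add_comm]; exact Nat.choose_succ_self_right m
  have c0 : (0 + m).choose m = 1 := by simp
  have e1 : 1 + m = m + 1 := by omega
  rw [c1, c0, e1]
  push_cast
  ring

lemma keyPoly {ι : Type*} [DecidableEq ι] (v : ι → R) :
    ∀ (s : Finset ι) (p : R[X]) (c : R), p.natDegree ≤ s.card →
      ∑ S ∈ s.powerset, (-1:R)^(s.card - S.card) * p.eval (c + ∑ j ∈ S, v j)
        = ((Nat.factorial s.card : ℕ) : R) * p.coeff s.card * ∏ j ∈ s, v j := by
  intro s
  induction s using Finset.induction_on with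
  | empty =>
      intro p c hp
      rw [Polynomial.eq_C_of_natDegree_le_zero (p := p) (by simpa using hp)]
      simp
  | insert a t ha ih =>
      intro p c hp
      have hcard : (insert a t).card = t.card + 1 := Finset.card_insert_of_notMem ha
      rw [hcard] at hp
      set b := v a with hb
      set q := p.comp (X + C b) - p with hq
      have hqdeg : q.natDegree ≤ t.card := q_deg p b hp
      have hstep : ∑ S ∈ (insert a t).powerset,
            (-1:R)^((insert a t).card - S.card) * p.eval (c + ∑ j ∈ S, v j)
          = ∑ S ∈ t.powerset, (-1:R)^(t.card - S.card) * q.eval (c + ∑ j ∈ S, v j) := by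
        have hdisj : Disjoint t.powerset (t.powerset.image (insert a)) := by
          rw [Finset.disjoint_left]
          intro S hS hS'
          obtain ⟨S', hS', rfl⟩ := Finset.mem_image.mp hS'
          exact ha (Finset.mem_powerset.mp hS (Finset.mem_insert_self a S'))
        rw [Finset.powerset_insert, Finset.sum_union hdisj, Finset.sum_image ?hinj]
        case hinj =>
          intro S1 h1 S2 h2 h
          have ha1 : a ∉ S1 := fun hx => ha (Finset.mem_powerset.mp h1 hx)
          have ha2 : a ∉ S2 := fun hx => ha (Finset.mem_powerset.mp h2 hx)
          rw [← Finset.erase_insert ha1, ← Finset.erase_insert ha2, h]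
        rw [← Finset.sum_add_distrib]
        refine Finset.sum_congr rfl ?_
        intro S hS
        have hSt : S ⊆ t := Finset.mem_powerset.mp hS
        have haS : a ∉ S := fun h => ha (hSt h)
        have hle : S.card ≤ t.card := Finset.card_le_card hSt
        rw [Finset.card_insert_of_notMem haS, Finset.sum_insert haS, hcard]
        have h1 : t.card + 1 - S.card = (t.card - S.card) + 1 := by omega
        have h2 : t.card + 1 - (S.card + 1) = t.card - S.card := by omega
        rw [h1, h2]
        have he : q.eval (c + ∑ j ∈ S, v j)
            = p.eval (c + (b + ∑ j ∈ S, v j)) - p.eval (c + ∑ j ∈ S, v j) := by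
          rw [hq]
          simp only [Polynomial.eval_sub, Polynomial.eval_comp, Polynomial.eval_add,
            Polynomial.eval_X, Polynomial.eval_C]
          ring_nf
        rw [he]
        ring
      rw [hstep, ih q c hqdeg, hcard, Finset.prod_insert ha,
        q_coeff p b t.card hp, Nat.factorial_succ]
      push_cast
      ring


open MonoidAlgebra

section Main

variable (n k : ℕ)

/-- generators of the free abelian group -/
def gen (i : Fin n) : FreeAb n := Multiplicative.ofAdd (Pi.single i 1)

lemma lin_one : lin n 1 = 0 := by simp [lin]

lemma lin_mul (a b : FreeAb n) : lin n (a * b) = lin n a + lin n b := by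
  simp [lin, add_smul, Finset.sum_add_distrib]

lemma lin_prod {ι : Type*} (s : Finset ι) (f : ι → FreeAb n) :
    lin n (∏ j ∈ s, f j) = ∑ j ∈ s, lin n (f j) := by
  classical
  induction s using Finset.cons_induction with
  | empty => simp [lin_one]
  | cons a s ha ih => rw [Finset.prod_cons, Finset.sum_cons, lin_mul, ih]

lemma lin_gen (i : Fin n) : lin n (gen n i) = MvPolynomial.X i := by
  classical
  simp only [lin, gen, toAdd_ofAdd]
  rw [Finset.sum_eq_single i]
  · simp
  · intro j _ hj
    simp [Pi.single_apply, hj]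
  · intro h; exact absurd (Finset.mem_univ i) h

lemma lin_homog (g : FreeAb n) :
    lin n g ∈ MvPolynomial.homogeneousSubmodule (Fin n) ℤ 1 :=
  Submodule.sum_mem _ fun i _ => Submodule.smul_mem _ _
    (by rw [MvPolynomial.mem_homogeneousSubmodule]; exact MvPolynomial.isHomogeneous_X _ _)

lemma pow_homog (g : FreeAb n) :
    (lin n g) ^ k ∈ MvPolynomial.homogeneousSubmodule (Fin n) ℤ k := by
  rw [MvPolynomial.mem_homogeneousSubmodule]
  have h := ((MvPolynomial.mem_homogeneousSubmodule _ _).mp (lin_homog n g)).pow k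
  simpa using h

/-- the additive map `ℤ[L] → S^k(L)` extending `g ↦ (lin g)^k`. -/
noncomputable def Phi : MonoidAlgebra ℤ (FreeAb n) →ₗ[ℤ] SymPow n k :=
  (Finsupp.lsum ℤ fun g =>
    LinearMap.toSpanSingleton ℤ _ (⟨(lin n g) ^ k, pow_homog n k g⟩ : SymPow n k))
    |>.comp (MonoidAlgebra.coeffLinearEquiv ℤ).toLinearMap

lemma Phi_single (g : FreeAb n) (c : ℤ) :
    Phi n k (MonoidAlgebra.single g c) = c • (⟨(lin n g) ^ k, pow_homog n k g⟩ : SymPow n k) := by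
  have h := Finsupp.lsum_single (S := ℤ) (fun g =>
    LinearMap.toSpanSingleton ℤ (SymPow n k) (⟨(lin n g) ^ k, pow_homog n k g⟩ : SymPow n k)) g c
  rw [Phi]
  exact h

/-- `Phi` composed with the inclusion into the polynomial ring. -/
noncomputable def Phi' : MonoidAlgebra ℤ (FreeAb n) →ₗ[ℤ] MvPolynomial (Fin n) ℤ :=
  ((MvPolynomial.homogeneousSubmodule (Fin n) ℤ k).subtype).comp (Phi n k)

lemma Phi'_apply (x : MonoidAlgebra ℤ (FreeAb n)) :
    Phi' n k x = ((Phi n k x : SymPow n k) : MvPolynomial (Fin n) ℤ) := rfl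

lemma Phi'_of (g : FreeAb n) : Phi' n k (of ℤ (FreeAb n) g) = (lin n g) ^ k := by
  rw [Phi'_apply]
  have : of ℤ (FreeAb n) g = MonoidAlgebra.single g 1 := rfl
  rw [this, Phi_single, one_smul]

lemma aug_of (g : FreeAb n) : aug (FreeAb n) (of ℤ (FreeAb n) g) = 1 := by
  simp [aug, MonoidAlgebra.lift_of]

lemma of_sub_one_mem (g : FreeAb n) : of ℤ (FreeAb n) g - 1 ∈ augIdeal (FreeAb n) := by
  rw [augIdeal, RingHom.mem_ker, map_sub, map_one, aug_of, sub_self]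

end Main


section Main2

variable (n k : ℕ)

/-- the ring hom `ℤ[X₁,…,Xₙ] → ℤ[L]`, `Xᵢ ↦ xᵢ - 1`. -/
noncomputable def Psi : MvPolynomial (Fin n) ℤ →ₐ[ℤ] MonoidAlgebra ℤ (FreeAb n) :=
  MvPolynomial.aeval (fun i => of ℤ (FreeAb n) (gen n i) - 1)

lemma Psi_X (i : Fin n) :
    Psi n (MvPolynomial.X i) = of ℤ (FreeAb n) (gen n i) - 1 :=
  MvPolynomial.aeval_X _ _

lemma Psi_lin (l : FreeAb n) :
    Psi n (lin n l) = ∑ i, (Multiplicative.toAdd l i) • (of ℤ (FreeAb n) (gen n i) - 1) := by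
  rw [lin, map_sum]
  refine Finset.sum_congr rfl fun i _ => ?_
  rw [map_zsmul, Psi_X]

lemma Psi_lin_mem (l : FreeAb n) : Psi n (lin n l) ∈ augIdeal (FreeAb n) := by
  rw [Psi_lin]
  exact Submodule.sum_mem _ fun i _ =>
    Submodule.smul_of_tower_mem _ _ (of_sub_one_mem n (gen n i))

lemma diff_mem (l : FreeAb n) :
    of ℤ (FreeAb n) l - 1 - Psi n (lin n l) ∈ augIdeal (FreeAb n) ^ 2 := by
  set I2 : Ideal (MonoidAlgebra ℤ (FreeAb n)) := augIdeal (FreeAb n) ^ 2 with hI2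
  set mk : MonoidAlgebra ℤ (FreeAb n) →+* _ := Ideal.Quotient.mk I2 with hmk
  have hadd : ∀ a b : Fin n → ℤ,
      mk (of ℤ (FreeAb n) (Multiplicative.ofAdd (a + b)) - 1)
        = mk (of ℤ (FreeAb n) (Multiplicative.ofAdd a) - 1)
          + mk (of ℤ (FreeAb n) (Multiplicative.ofAdd b) - 1) := by
    intro a b
    rw [← map_add, Ideal.Quotient.eq]
    have h1 : of ℤ (FreeAb n) (Multiplicative.ofAdd (a + b))
        = of ℤ (FreeAb n) (Multiplicative.ofAdd a) * of ℤ (FreeAb n) (Multiplicative.ofAdd b) := by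
      rw [← map_mul]; rfl
    have h2 : of ℤ (FreeAb n) (Multiplicative.ofAdd (a + b)) - 1 -
        (of ℤ (FreeAb n) (Multiplicative.ofAdd a) - 1 +
          (of ℤ (FreeAb n) (Multiplicative.ofAdd b) - 1))
        = (of ℤ (FreeAb n) (Multiplicative.ofAdd a) - 1) *
          (of ℤ (FreeAb n) (Multiplicative.ofAdd b) - 1) := by
      rw [h1]; ring
    rw [h2, hI2, pow_two]
    exact Ideal.mul_mem_mul (of_sub_one_mem n _) (of_sub_one_mem n _)
  set θ : (Fin n → ℤ) →+ (MonoidAlgebra ℤ (FreeAb n) ⧸ I2) :=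
    AddMonoidHom.mk' (fun a => mk (of ℤ (FreeAb n) (Multiplicative.ofAdd a) - 1)) hadd with hθ
  have key : mk (of ℤ (FreeAb n) l - 1) = mk (Psi n (lin n l)) := by
    have h3 : mk (of ℤ (FreeAb n) l - 1) = θ (Multiplicative.toAdd l) := rfl
    have h4 : θ (Multiplicative.toAdd l)
        = ∑ i, (Multiplicative.toAdd l i) • θ (Pi.single i 1) := by
      conv_lhs => rw [← Finset.univ_sum_single (Multiplicative.toAdd l), map_sum]
      refine Finset.sum_congr rfl fun i _ => ?_
      have : Pi.single i (Multiplicative.toAdd l i) = (Multiplicative.toAdd l i) • (Pi.single i 1 : Fin n → ℤ) := by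
        ext j
        by_cases h : j = i <;> simp [Pi.single_apply, h]
      rw [this, map_zsmul]
    rw [h3, h4, Psi_lin, map_sum]
    refine Finset.sum_congr rfl fun i _ => ?_
    rw [map_zsmul]
    rfl
  rw [Ideal.Quotient.eq] at key
  exact key

lemma prod_mem_pow {B : Type*} [CommRing B] (J : Ideal B) {ι : Type*}
    (s : Finset ι) (y : ι → B) (d : ι → ℕ) (hy : ∀ i ∈ s, y i ∈ J) :
    (∏ i ∈ s, y i ^ d i) ∈ J ^ (∑ i ∈ s, d i) := by
  classical
  induction s using Finset.cons_induction with
  | empty => simp [Ideal.one_eq_top]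
  | cons a s ha ih =>
      rw [Finset.prod_cons, Finset.sum_cons, pow_add]
      exact Ideal.mul_mem_mul (Ideal.pow_mem_pow (hy a (Finset.mem_cons_self a s)) _)
        (ih fun i hi => hy i (Finset.mem_cons_of_mem hi))

lemma prod_mem_card {B : Type*} [CommRing B] (J : Ideal B) {ι : Type*}
    (s : Finset ι) (y : ι → B) (hy : ∀ i ∈ s, y i ∈ J) :
    (∏ i ∈ s, y i) ∈ J ^ s.card := by
  have h := prod_mem_pow J s y (fun _ => 1) hy
  simpa using h

lemma tele {B : Type*} [CommRing B] (J : Ideal B) {ι : Type*}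
    (s : Finset ι) (a b : ι → B) (hha : ∀ j ∈ s, a j ∈ J) (hhb : ∀ j ∈ s, b j ∈ J)
    (hd : ∀ j ∈ s, a j - b j ∈ J ^ 2) :
    (∏ j ∈ s, a j) - (∏ j ∈ s, b j) ∈ J ^ (s.card + 1) := by
  classical
  induction s using Finset.cons_induction with
  | empty => simp
  | cons c t hc ih =>
      rw [Finset.prod_cons, Finset.prod_cons, Finset.card_cons]
      have hsplit : a c * ∏ j ∈ t, a j - b c * ∏ j ∈ t, b j
          = a c * ((∏ j ∈ t, a j) - ∏ j ∈ t, b j) + (a c - b c) * ∏ j ∈ t, b j := by ring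
      rw [hsplit]
      refine Submodule.add_mem _ ?_ ?_
      · have h1 : a c * ((∏ j ∈ t, a j) - ∏ j ∈ t, b j) ∈ J * J ^ (t.card + 1) :=
          Ideal.mul_mem_mul (hha c (Finset.mem_cons_self c t))
            (ih (fun j hj => hha j (Finset.mem_cons_of_mem hj))
              (fun j hj => hhb j (Finset.mem_cons_of_mem hj))
              (fun j hj => hd j (Finset.mem_cons_of_mem hj)))
        have : J * J ^ (t.card + 1) = J ^ (t.card + 1 + 1) := by ring
        rwa [this] at h1
      · have h2 : (a c - b c) * ∏ j ∈ t, b j ∈ J ^ 2 * J ^ t.card :=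
          Ideal.mul_mem_mul (hd c (Finset.mem_cons_self c t))
            (prod_mem_card J t b (fun j hj => hhb j (Finset.mem_cons_of_mem hj)))
        have : J ^ 2 * J ^ t.card = J ^ (t.card + 1 + 1) := by ring
        rwa [this] at h2

lemma congr_prod (m : ℕ) (l : Fin m → FreeAb n) :
    Psi n (∏ j, lin n (l j)) - ∏ j, (of ℤ (FreeAb n) (l j) - 1)
      ∈ augIdeal (FreeAb n) ^ (m + 1) := by
  rw [map_prod]
  have h := tele (augIdeal (FreeAb n)) Finset.univ
    (fun j => Psi n (lin n (l j))) (fun j => of ℤ (FreeAb n) (l j) - 1)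
    (fun j _ => Psi_lin_mem n (l j)) (fun j _ => of_sub_one_mem n (l j))
    (fun j _ => by
      have := diff_mem n (l j)
      have h2 : Psi n (lin n (l j)) - (of ℤ (FreeAb n) (l j) - 1)
          = -(of ℤ (FreeAb n) (l j) - 1 - Psi n (lin n (l j))) := by ring
      rw [h2]
      exact Submodule.neg_mem _ this)
  simpa using h

end Main2

section Main3

variable (n k : ℕ)

lemma aug_apply (x : MonoidAlgebra ℤ (FreeAb n)) :
    aug (FreeAb n) x = ∑ g ∈ x.coeff.support, x.coeff g := by
  show (MonoidAlgebra.lift ℤ ℤ (FreeAb n)) 1 x = _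
  rw [MonoidAlgebra.lift_apply]
  simp [Finsupp.sum]

lemma rep_of (x : MonoidAlgebra ℤ (FreeAb n)) :
    ∑ g ∈ x.coeff.support, x.coeff g • of ℤ (FreeAb n) g = x := by
  conv_rhs => rw [← MonoidAlgebra.sum_coeff_single x]
  rw [Finsupp.sum]
  refine Finset.sum_congr rfl fun g _ => ?_
  show x.coeff g • MonoidAlgebra.single g (1:ℤ) = _
  rw [MonoidAlgebra.smul_single', mul_one]

lemma mem_span_sub_one {x : MonoidAlgebra ℤ (FreeAb n)} (hx : x ∈ augIdeal (FreeAb n)) :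
    x ∈ Submodule.span ℤ {y : MonoidAlgebra ℤ (FreeAb n) | ∃ g, y = of ℤ (FreeAb n) g - 1} := by
  rw [augIdeal, RingHom.mem_ker, aug_apply] at hx
  have hrep : x = ∑ g ∈ x.coeff.support, x.coeff g • (of ℤ (FreeAb n) g - 1) := by
    have h1 : ∑ g ∈ x.coeff.support, x.coeff g • (of ℤ (FreeAb n) g - 1)
        = (∑ g ∈ x.coeff.support, x.coeff g • of ℤ (FreeAb n) g)
          - ∑ g ∈ x.coeff.support, x.coeff g • (1 : MonoidAlgebra ℤ (FreeAb n)) := by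
      rw [← Finset.sum_sub_distrib]
      exact Finset.sum_congr rfl fun g _ => smul_sub _ _ _
    have h3 : ∑ g ∈ x.coeff.support, x.coeff g • (1 : MonoidAlgebra ℤ (FreeAb n)) = 0 := by
      rw [← Finset.sum_smul, hx, zero_smul]
    rw [h1, h3, rep_of, sub_zero]
  rw [hrep]
  exact Submodule.sum_mem _ fun g _ =>
    Submodule.smul_mem _ _ (Submodule.subset_span ⟨g, rfl⟩)

/-- generating set of `I^m` as a `ℤ`-module -/
def genSet (m : ℕ) : Set (MonoidAlgebra ℤ (FreeAb n)) :=
  {x | ∃ (g : FreeAb n) (l : Fin m → FreeAb n),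
    x = of ℤ (FreeAb n) g * ∏ j, (of ℤ (FreeAb n) (l j) - 1)}

lemma all_mem_span_genSet_zero (r : MonoidAlgebra ℤ (FreeAb n)) :
    r ∈ Submodule.span ℤ (genSet n 0) := by
  rw [← rep_of n r]
  refine Submodule.sum_mem _ fun g _ => Submodule.smul_mem _ _ (Submodule.subset_span ?_)
  exact ⟨g, (fun j => j.elim0), by simp⟩

lemma mul_mem_span_genSet (i : ℕ) {w y : MonoidAlgebra ℤ (FreeAb n)}
    (hw : w ∈ Submodule.span ℤ {y : MonoidAlgebra ℤ (FreeAb n) | ∃ g, y = of ℤ (FreeAb n) g - 1})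
    (hy : y ∈ Submodule.span ℤ (genSet n i)) :
    w * y ∈ Submodule.span ℤ (genSet n (i + 1)) := by
  induction hy using Submodule.span_induction with
  | mem y hy =>
      obtain ⟨g, l, rfl⟩ := hy
      induction hw using Submodule.span_induction with
      | mem w hw =>
          obtain ⟨h, rfl⟩ := hw
          refine Submodule.subset_span ⟨g, Fin.cons h l, ?_⟩
          rw [Fin.prod_univ_succ]
          simp only [Fin.cons_succ, Fin.cons_zero]
          ring
      | zero => rw [zero_mul]; exact Submodule.zero_mem _
      | add w1 w2 _ _ h1 h2 => rw [add_mul]; exact Submodule.add_mem _ h1 h2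
      | smul c w _ h => rw [smul_mul_assoc]; exact Submodule.smul_mem _ _ h
  | zero => rw [mul_zero]; exact Submodule.zero_mem _
  | add y1 y2 _ _ h1 h2 => rw [mul_add]; exact Submodule.add_mem _ h1 h2
  | smul c y _ h => rw [mul_smul_comm]; exact Submodule.smul_mem _ _ h

lemma mem_span_genSet (m : ℕ) {x : MonoidAlgebra ℤ (FreeAb n)}
    (hx : x ∈ augIdeal (FreeAb n) ^ m) :
    x ∈ Submodule.span ℤ (genSet n m) := by
  induction hx using Submodule.pow_induction_on_left' with
  | algebraMap r =>
      exact all_mem_span_genSet_zero n r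
  | add x y i hx hy ihx ihy => exact Submodule.add_mem _ ihx ihy
  | mem_mul m hm i x hx ihx => exact mul_mem_span_genSet n i (mem_span_sub_one n hm) ihx

lemma Phi'_single (h : FreeAb n) (c : ℤ) :
    Phi' n k (MonoidAlgebra.single h c) = c • (lin n h) ^ k := by
  show ((Phi n k (MonoidAlgebra.single h c) : SymPow n k) : MvPolynomial (Fin n) ℤ) = _
  rw [Phi_single]
  rfl

lemma Phi'_expand (m : ℕ) (g : FreeAb n) (l : Fin m → FreeAb n) :
    Phi' n k (of ℤ (FreeAb n) g * ∏ j, (of ℤ (FreeAb n) (l j) - 1))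
      = ∑ S ∈ (Finset.univ : Finset (Fin m)).powerset,
          (-1 : MvPolynomial (Fin n) ℤ) ^ (m - S.card)
            * (lin n g + ∑ j ∈ S, lin n (l j)) ^ k := by
  classical
  have hexp : of ℤ (FreeAb n) g * ∏ j, (of ℤ (FreeAb n) (l j) - 1)
      = ∑ S ∈ (Finset.univ : Finset (Fin m)).powerset,
          MonoidAlgebra.single (g * ∏ j ∈ S, l j) ((-1 : ℤ) ^ (m - S.card)) := by
    have h1 : (∏ j, (of ℤ (FreeAb n) (l j) - 1))
        = ∏ j, (of ℤ (FreeAb n) (l j) + (-1)) := by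
      refine Finset.prod_congr rfl fun j _ => by ring
    rw [h1, Finset.prod_add, Finset.mul_sum]
    refine Finset.sum_congr rfl fun S hS => ?_
    have hc : (Finset.univ \ S).card = m - S.card := by
      rw [Finset.card_sdiff_of_subset (Finset.mem_powerset.mp hS)]
      simp
    rw [Finset.prod_const, hc]
    have hof : of ℤ (FreeAb n) (g * ∏ j ∈ S, l j)
        = MonoidAlgebra.single (g * ∏ j ∈ S, l j) (1:ℤ) := rfl
    rw [show (MonoidAlgebra.single (g * ∏ j ∈ S, l j) ((-1:ℤ) ^ (m - S.card))
          : MonoidAlgebra ℤ (FreeAb n))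
        = ((-1:ℤ) ^ (m - S.card)) • of ℤ (FreeAb n) (g * ∏ j ∈ S, l j) from by
      rw [hof, MonoidAlgebra.smul_single', mul_one]]
    rw [← Int.cast_smul_eq_zsmul (MonoidAlgebra ℤ (FreeAb n)), smul_eq_mul, map_mul, map_prod]
    push_cast
    ring
  rw [hexp, map_sum]
  refine Finset.sum_congr rfl fun S hS => ?_
  rw [Phi'_single, lin_mul, lin_prod]
  rw [MvPolynomial.smul_eq_C_mul, map_pow, map_neg, map_one]

lemma Phi'_vanish {x : MonoidAlgebra ℤ (FreeAb n)}
    (hx : x ∈ augIdeal (FreeAb n) ^ (k + 1)) : Phi' n k x = 0 := by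
  have hs := mem_span_genSet n (k + 1) hx
  clear hx
  induction hs using Submodule.span_induction with
  | mem y hy =>
      obtain ⟨g, l, rfl⟩ := hy
      rw [Phi'_expand]
      have hkey := keyPoly (fun j => lin n (l j)) (Finset.univ : Finset (Fin (k+1)))
        (Polynomial.X ^ k) (lin n g) (by simp [Polynomial.natDegree_X_pow])
      simp only [Polynomial.eval_pow, Polynomial.eval_X, Finset.card_univ,
        Fintype.card_fin, Polynomial.coeff_X_pow] at hkey
      rw [hkey]
      simp
  | zero => exact map_zero _
  | add y1 y2 _ _ h1 h2 => rw [map_add, h1, h2, add_zero]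
  | smul c y _ h => rw [map_smul, h, smul_zero]

lemma Phi_vanish {x : MonoidAlgebra ℤ (FreeAb n)}
    (hx : x ∈ augIdeal (FreeAb n) ^ (k + 1)) : Phi n k x = 0 := by
  have h := Phi'_vanish n k hx
  exact Subtype.ext h

lemma Phi'_value (l : Fin k → FreeAb n) :
    Phi' n k (∏ j, (of ℤ (FreeAb n) (l j) - 1))
      = ((Nat.factorial k : ℤ) : MvPolynomial (Fin n) ℤ) * ∏ j, lin n (l j) := by
  classical
  have h0 := Phi'_expand n k k 1 l
  rw [map_one, one_mul] at h0
  rw [h0]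
  have hkey := keyPoly (fun j => lin n (l j)) (Finset.univ : Finset (Fin k))
    (Polynomial.X ^ k) (lin n 1) (by simp [Polynomial.natDegree_X_pow])
  simp only [Polynomial.eval_pow, Polynomial.eval_X, Finset.card_univ,
    Fintype.card_fin, Polynomial.coeff_X_pow, if_pos rfl] at hkey
  rw [hkey]
  push_cast
  ring

end Main3

section Main4

variable (n k : ℕ)

lemma psi_mem_pow {p : MvPolynomial (Fin n) ℤ}
    (hp : p ∈ MvPolynomial.homogeneousSubmodule (Fin n) ℤ k) :
    Psi n p ∈ augIdeal (FreeAb n) ^ k := by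
  rw [MvPolynomial.mem_homogeneousSubmodule] at hp
  rw [MvPolynomial.as_sum p, map_sum]
  refine Submodule.sum_mem _ fun d hd => ?_
  show (MvPolynomial.aeval fun i => of ℤ (FreeAb n) (gen n i) - 1)
      ((MvPolynomial.monomial d) (MvPolynomial.coeff d p)) ∈ _
  rw [MvPolynomial.aeval_monomial]
  have hdeg : ∑ i ∈ d.support, d i = k := by
    have h1 : Finsupp.degree d = k := by
      rw [Finsupp.degree_eq_weight_one]
      exact hp (MvPolynomial.mem_support_iff.mp hd)
    simpa [Finsupp.degree_apply] using h1
  refine Ideal.mul_mem_left _ _ ?_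
  have h2 := prod_mem_pow (augIdeal (FreeAb n)) d.support
    (fun i => of ℤ (FreeAb n) (gen n i) - 1) (fun i => d i)
    (fun i _ => of_sub_one_mem n (gen n i))
  rw [hdeg] at h2
  exact h2

lemma prod_lin_homog (m : ℕ) (l : Fin m → FreeAb n) :
    (∏ j, lin n (l j)) ∈ MvPolynomial.homogeneousSubmodule (Fin n) ℤ m := by
  rw [MvPolynomial.mem_homogeneousSubmodule]
  have h := MvPolynomial.IsHomogeneous.prod Finset.univ (fun j => lin n (l j))
    (fun _ => 1) (fun j _ => (MvPolynomial.mem_homogeneousSubmodule _ _).mp (lin_homog n (l j)))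
  simpa using h

lemma prod_of_sub_one_mem (m : ℕ) (l : Fin m → FreeAb n) :
    ∏ j, (of ℤ (FreeAb n) (l j) - 1) ∈ augIdeal (FreeAb n) ^ m := by
  have h := prod_mem_card (augIdeal (FreeAb n)) Finset.univ
    (fun j => of ℤ (FreeAb n) (l j) - 1) (fun j _ => of_sub_one_mem n (l j))
  simpa using h

/-- the map `q` -/
noncomputable def qMap : SymPow n k →ₗ[ℤ] IQuot n k where
  toFun s := Submodule.Quotient.mk ⟨Psi n s.1, psi_mem_pow n k s.2⟩
  map_add' a b := by
    rw [← Submodule.Quotient.mk_add]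
    refine congrArg _ (Subtype.ext ?_)
    show Psi n ((a + b : SymPow n k) : MvPolynomial (Fin n) ℤ) = Psi n a.1 + Psi n b.1
    rw [Submodule.coe_add, map_add]
  map_smul' c a := by
    simp only [RingHom.id_apply]
    rw [← Submodule.Quotient.mk_smul]
    refine congrArg _ (Subtype.ext ?_)
    show Psi n ((c • a : SymPow n k) : MvPolynomial (Fin n) ℤ) = c • Psi n a.1
    rw [SetLike.val_smul, map_smul]

lemma q_spec (l : Fin k → FreeAb n)
    (hm : (∏ j, lin n (l j)) ∈ MvPolynomial.homogeneousSubmodule (Fin n) ℤ k)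
    (hI : (∏ j, (of ℤ (FreeAb n) (l j) - 1)) ∈ augIdeal (FreeAb n) ^ k) :
    qMap n k ⟨∏ j, lin n (l j), hm⟩
      = Submodule.Quotient.mk ⟨∏ j, (of ℤ (FreeAb n) (l j) - 1), hI⟩ := by
  show Submodule.Quotient.mk _ = _
  rw [Submodule.Quotient.eq, Submodule.mem_comap]
  simpa using congr_prod n k l

/-- the underlying function of `φ` -/
noncomputable def phiFun (x : IQuot n k) : SymPow n k :=
  Quotient.liftOn' x (fun y => Phi n k y.1) (by
    intro y z hyz
    have h1 : y - z ∈ Submodule.comap (augIdeal (FreeAb n) ^ k).subtype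
        (augIdeal (FreeAb n) ^ (k + 1)) := (Submodule.quotientRel_def _).mp hyz
    have h2 : (y : MonoidAlgebra ℤ (FreeAb n)) - z ∈ augIdeal (FreeAb n) ^ (k + 1) := by
      simpa using h1
    have h3 := Phi_vanish n k h2
    rw [map_sub, sub_eq_zero] at h3
    exact h3)

lemma phiFun_mk (y : ↥(augIdeal (FreeAb n) ^ k)) :
    phiFun n k (Submodule.Quotient.mk y) = Phi n k y.1 := rfl

/-- the map `φ` -/
noncomputable def phiMap : IQuot n k →+ SymPow n k where
  toFun := phiFun n k
  map_zero' := by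
    have h : (0 : IQuot n k) = Submodule.Quotient.mk 0 := (Submodule.Quotient.mk_zero _).symm
    rw [h, phiFun_mk, ZeroMemClass.coe_zero, map_zero]
  map_add' x y := by
    obtain ⟨a, rfl⟩ := Submodule.Quotient.mk_surjective _ x
    obtain ⟨b, rfl⟩ := Submodule.Quotient.mk_surjective _ y
    rw [← Submodule.Quotient.mk_add]
    show phiFun n k (Submodule.Quotient.mk (a + b))
      = phiFun n k (Submodule.Quotient.mk a) + phiFun n k (Submodule.Quotient.mk b)
    rw [phiFun_mk, phiFun_mk, phiFun_mk, Submodule.coe_add, map_add]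

lemma phiMap_mk (y : ↥(augIdeal (FreeAb n) ^ k)) :
    phiMap n k (Submodule.Quotient.mk y) = Phi n k y.1 := rfl

end Main4

section Main5

variable (n k : ℕ)

set_option maxHeartbeats 1000000 in
lemma q_surj : Function.Surjective (qMap n k) := by
  intro c
  obtain ⟨x, rfl⟩ := Submodule.Quotient.mk_surjective _ c
  suffices h : ∀ z (hz : z ∈ augIdeal (FreeAb n) ^ k),
      ∃ s : SymPow n k, qMap n k s = Submodule.Quotient.mk ⟨z, hz⟩ by
    obtain ⟨s, hs⟩ := h x.1 x.2
    exact ⟨s, hs⟩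
  intro z hz
  let W : Submodule ℤ (MonoidAlgebra ℤ (FreeAb n)) :=
    { carrier := {z | ∃ hz : z ∈ augIdeal (FreeAb n) ^ k,
        ∃ s : SymPow n k, qMap n k s = Submodule.Quotient.mk ⟨z, hz⟩}
      zero_mem' := ⟨Submodule.zero_mem _, 0, by
        rw [map_zero]
        have h0 : (⟨0, Submodule.zero_mem _⟩ : ↥(augIdeal (FreeAb n) ^ k)) = 0 := rfl
        rw [h0, Submodule.Quotient.mk_zero]⟩
      add_mem' := by
        rintro a b ⟨ha, sa, hsa⟩ ⟨hb, sb, hsb⟩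
        refine ⟨Submodule.add_mem _ ha hb, sa + sb, ?_⟩
        rw [map_add, hsa, hsb, ← Submodule.Quotient.mk_add]
        rfl
      smul_mem' := by
        rintro c a ⟨ha, sa, hsa⟩
        refine ⟨Submodule.smul_of_tower_mem _ c ha, c • sa, ?_⟩
        rw [map_smul, hsa, ← Submodule.Quotient.mk_smul]
        rfl }
  have hgen : genSet n k ⊆ W := by
    rintro y ⟨g, l, rfl⟩
    have hprod := prod_of_sub_one_mem n k l
    have hy : of ℤ (FreeAb n) g * ∏ j, (of ℤ (FreeAb n) (l j) - 1) ∈ augIdeal (FreeAb n) ^ k :=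
      Ideal.mul_mem_left _ _ hprod
    refine ⟨hy, ⟨∏ j, lin n (l j), prod_lin_homog n k l⟩, ?_⟩
    rw [q_spec n k l (prod_lin_homog n k l) hprod]
    rw [Submodule.Quotient.eq, Submodule.mem_comap]
    have hdiff : (∏ j, (of ℤ (FreeAb n) (l j) - 1))
        - of ℤ (FreeAb n) g * ∏ j, (of ℤ (FreeAb n) (l j) - 1)
        = (1 - of ℤ (FreeAb n) g) * ∏ j, (of ℤ (FreeAb n) (l j) - 1) := by ring
    have hmem : (1 - of ℤ (FreeAb n) g) * ∏ j, (of ℤ (FreeAb n) (l j) - 1)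
        ∈ augIdeal (FreeAb n) ^ (k + 1) := by
      have h1 : (1 : MonoidAlgebra ℤ (FreeAb n)) - of ℤ (FreeAb n) g ∈ augIdeal (FreeAb n) := by
        have := of_sub_one_mem n g
        have h2 : (1 : MonoidAlgebra ℤ (FreeAb n)) - of ℤ (FreeAb n) g
            = -(of ℤ (FreeAb n) g - 1) := by ring
        rw [h2]
        exact Submodule.neg_mem _ this
      have h3 := Ideal.mul_mem_mul h1 hprod
      rwa [← pow_succ'] at h3
    show ((⟨∏ j, (of ℤ (FreeAb n) (l j) - 1), hprod⟩ : ↥(augIdeal (FreeAb n) ^ k))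
        - ⟨_, hy⟩ : ↥(augIdeal (FreeAb n) ^ k)).1 ∈ augIdeal (FreeAb n) ^ (k + 1)
    rw [AddSubgroupClass.coe_sub]
    rw [← hdiff] at hmem
    exact hmem
  have hW : z ∈ W := Submodule.span_le.mpr hgen (mem_span_genSet n k hz)
  obtain ⟨hz', s, hs⟩ := hW
  exact ⟨s, hs⟩

lemma monomial_prod : ∀ (m : ℕ) (d : Fin n →₀ ℕ), Finsupp.degree d = m →
    ∃ l : Fin m → FreeAb n, (MvPolynomial.monomial d (1:ℤ)) = ∏ j, lin n (l j) := by
  intro m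
  induction m with
  | zero =>
      intro d hd
      rw [Finsupp.degree_eq_zero_iff] at hd
      subst hd
      exact ⟨fun j => j.elim0, by simp⟩
  | succ m ih =>
      intro d hd
      have hne : d ≠ 0 := by
        intro h
        rw [h, map_zero] at hd
        omega
      obtain ⟨i0, hi0⟩ : ∃ i, d i ≠ 0 := by
        by_contra h
        push_neg at h
        exact hne (Finsupp.ext fun i => h i)
      have hle : Finsupp.single i0 1 ≤ d := by
        rw [Finsupp.single_le_iff]
        omega
      set d' := d - Finsupp.single i0 1 with hd'
      have hsum : d' + Finsupp.single i0 1 = d := tsub_add_cancel_of_le hle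
      have hdeg' : Finsupp.degree d' = m := by
        have h1 : Finsupp.degree (d' + Finsupp.single i0 1)
            = Finsupp.degree d' + Finsupp.degree (Finsupp.single i0 1) := by
          simp only [Finsupp.degree_eq_weight_one]
          exact map_add _ _ _
        rw [hsum] at h1
        have h2 : Finsupp.degree (Finsupp.single i0 (1:ℕ)) = 1 := by
          simp [Finsupp.degree_apply, Finsupp.support_single_ne_zero _ (one_ne_zero)]
        rw [h2, hd] at h1
        omega
      obtain ⟨l', hl'⟩ := ih d' hdeg'
      refine ⟨Fin.cons (gen n i0) l', ?_⟩
      have hmon : (MvPolynomial.monomial d (1:ℤ))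
          = MvPolynomial.X i0 * MvPolynomial.monomial d' 1 := by
        rw [MvPolynomial.X, MvPolynomial.monomial_mul, ← hsum]
        rw [one_mul, add_comm]
      rw [hmon, Fin.prod_univ_succ]
      simp only [Fin.cons_succ, Fin.cons_zero]
      rw [lin_gen, ← hl']

lemma mem_span_prods {p : MvPolynomial (Fin n) ℤ}
    (hp : p ∈ MvPolynomial.homogeneousSubmodule (Fin n) ℤ k) :
    p ∈ Submodule.span ℤ
      {x : MvPolynomial (Fin n) ℤ | ∃ l : Fin k → FreeAb n, x = ∏ j, lin n (l j)} := by
  rw [MvPolynomial.mem_homogeneousSubmodule] at hp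
  rw [MvPolynomial.as_sum p]
  refine Submodule.sum_mem _ fun d hd => ?_
  have hdeg : Finsupp.degree d = k := by
    rw [Finsupp.degree_eq_weight_one]
    exact hp (MvPolynomial.mem_support_iff.mp hd)
  obtain ⟨l, hl⟩ := monomial_prod n k d hdeg
  have hsm : (MvPolynomial.monomial d) (MvPolynomial.coeff d p)
      = (MvPolynomial.coeff d p) • MvPolynomial.monomial d (1:ℤ) := by
    rw [MvPolynomial.smul_monomial, smul_eq_mul, mul_one]
  rw [hsm, hl]
  exact Submodule.smul_mem _ _ (Submodule.subset_span ⟨l, rfl⟩)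

lemma PhiPsi {p : MvPolynomial (Fin n) ℤ}
    (hsp : p ∈ Submodule.span ℤ
      {x : MvPolynomial (Fin n) ℤ | ∃ l : Fin k → FreeAb n, x = ∏ j, lin n (l j)}) :
    Phi' n k (Psi n p) = (k.factorial : ℤ) • p := by
  induction hsp using Submodule.span_induction with
  | mem x hx =>
      obtain ⟨l, rfl⟩ := hx
      have hcong := congr_prod n k l
      have h0 : Phi' n k (Psi n (∏ j, lin n (l j)) - ∏ j, (of ℤ (FreeAb n) (l j) - 1)) = 0 :=
        Phi'_vanish n k hcong
      rw [map_sub, sub_eq_zero] at h0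
      rw [h0, Phi'_value]
      rw [MvPolynomial.smul_eq_C_mul, eq_intCast MvPolynomial.C]
  | zero => simp
  | add y1 y2 _ _ h1 h2 => rw [map_add, map_add, h1, h2, smul_add]
  | smul c y _ h =>
      rw [map_smul, map_smul, h, smul_comm]

lemma phi_spec (l : Fin k → FreeAb n)
    (hm : (∏ j, lin n (l j)) ∈ MvPolynomial.homogeneousSubmodule (Fin n) ℤ k)
    (hI : (∏ j, (of ℤ (FreeAb n) (l j) - 1)) ∈ augIdeal (FreeAb n) ^ k) :
    phiMap n k (Submodule.Quotient.mk ⟨∏ j, (of ℤ (FreeAb n) (l j) - 1), hI⟩)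
      = (k.factorial : ℤ) • (⟨∏ j, lin n (l j), hm⟩ : SymPow n k) := by
  rw [phiMap_mk]
  apply Subtype.ext
  show Phi' n k (∏ j, (of ℤ (FreeAb n) (l j) - 1)) = _
  rw [Phi'_value]
  show _ = (k.factorial : ℤ) • (∏ j, lin n (l j))
  rw [MvPolynomial.smul_eq_C_mul, eq_intCast MvPolynomial.C]

lemma phi_q (s : SymPow n k) :
    phiMap n k (qMap n k s) = (k.factorial : ℤ) • s := by
  have h : qMap n k s = Submodule.Quotient.mk ⟨Psi n s.1, psi_mem_pow n k s.2⟩ := rfl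
  rw [h, phiMap_mk]
  apply Subtype.ext
  show Phi' n k (Psi n s.1) = _
  rw [PhiPsi n k (mem_span_prods n k s.2)]
  rfl

end Main5

end Stmt10Aux

/-- for `L` free abelian of rank `n` and `I` the augmentation ideal
of `ℤ[L]`, the map `q_k : S^k(L) → I^k/I^{k+1}`, `l₁⋯l_k ↦ [(l₁−1)⋯(l_k−1)]`, is a
well-defined surjective group homomorphism; moreover the map
`φ_k : I^k/I^{k+1} → S^k(L)` induced by the linear extension of `l ↦ l^k`
satisfies `φ_k([(l₁−1)⋯(l_k−1)]) = k!·(l₁⋯l_k)`, so that `φ_k ∘ q_k = k!·Id`. -/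
theorem stmt10 (n k : ℕ) :
    ∃ (q : SymPow n k →+ IQuot n k) (φ : IQuot n k →+ SymPow n k),
      (∀ (l : Fin k → FreeAb n)
          (hm : (∏ j, lin n (l j)) ∈ MvPolynomial.homogeneousSubmodule (Fin n) ℤ k)
          (hI : (∏ j, (MonoidAlgebra.of ℤ (FreeAb n) (l j) - 1)) ∈ augIdeal (FreeAb n) ^ k),
        q ⟨∏ j, lin n (l j), hm⟩ =
          Submodule.Quotient.mk ⟨∏ j, (MonoidAlgebra.of ℤ (FreeAb n) (l j) - 1), hI⟩) ∧
      Function.Surjective q ∧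
      (∀ (l : Fin k → FreeAb n)
          (hm : (∏ j, lin n (l j)) ∈ MvPolynomial.homogeneousSubmodule (Fin n) ℤ k)
          (hI : (∏ j, (MonoidAlgebra.of ℤ (FreeAb n) (l j) - 1)) ∈ augIdeal (FreeAb n) ^ k),
        φ (Submodule.Quotient.mk ⟨∏ j, (MonoidAlgebra.of ℤ (FreeAb n) (l j) - 1), hI⟩) =
          (k.factorial : ℤ) • (⟨∏ j, lin n (l j), hm⟩ : SymPow n k)) ∧
      (∀ s : SymPow n k, φ (q s) = (k.factorial : ℤ) • s) := by
  refine ⟨(Stmt10Aux.qMap n k).toAddMonoidHom, Stmt10Aux.phiMap n k, ?_, ?_, ?_, ?_⟩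
  · intro l hm hI
    exact Stmt10Aux.q_spec n k l hm hI
  · exact Stmt10Aux.q_surj n k
  · intro l hm hI
    exact Stmt10Aux.phi_spec n k l hm hI
  · exact Stmt10Aux.phi_q n k
end

section
/- Let L be a finitely generated free abelian group and I the augmentation ideal of ℤ[L]. For each k ≥ 0, the natural homomorphism q_k : S^k(L) → I^k/I^{k+1}, l₁⋯l_k ↦ [(l₁−1)⋯(l_k−1)], is an isomorphism of abelian groups. -/
set_option maxHeartbeats 1000000
set_option synthInstance.maxHeartbeats 400000

open MonoidAlgebra

namespace Stmt11Aux
open MvPolynomial Pointwise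
noncomputable section
variable {n k : ℕ}

abbrev A (n : ℕ) := MonoidAlgebra ℤ (FreeAb n)
abbrev R (n : ℕ) := MvPolynomial (Fin n) ℤ

/-- the `i`-th generator of the free abelian group. -/
def gen (n : ℕ) (i : Fin n) : FreeAb n := Multiplicative.ofAdd (Pi.single i 1)

/-- the `i`-th generator inside the group ring. -/
def e (n : ℕ) (i : Fin n) : A n := MonoidAlgebra.of ℤ (FreeAb n) (gen n i)

/-- A monoid hom from the free abelian group killing all generators is trivial. -/
lemma hom_trivial {M : Type*} [CommGroup M] (f : FreeAb n →* M)
    (h : ∀ i, f (gen n i) = 1) (l : FreeAb n) : f l = 1 := by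
  have key : MonoidHom.toAdditiveRight f = 0 := by
    apply AddMonoidHom.functions_ext
    intro i x
    have hs : Pi.single i x = (x • Pi.single i (1:ℤ) : Fin n → ℤ) := by
      funext j; by_cases hj : j = i <;> simp [Pi.single_apply, hj]
    rw [hs, map_zsmul]
    have : (MonoidHom.toAdditiveRight f) (Pi.single i (1:ℤ)) = 0 := by
      show Additive.ofMul (f (Multiplicative.ofAdd (Pi.single i 1))) = 0
      rw [show Multiplicative.ofAdd (Pi.single i (1:ℤ)) = gen n i from rfl, h i]; rfl
    rw [this, smul_zero]; simp
  have := DFunLike.congr_fun key (Multiplicative.toAdd l)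
  simpa using this

/- ### the polynomial side -/

/-- the irrelevant ideal of the polynomial ring -/
def mI (n : ℕ) : Ideal (R n) := Ideal.span (Set.range MvPolynomial.X)

lemma prod_pow_mem {S : Type*} [CommRing S] (J : Ideal S) {ι : Type*} (s : Finset ι)
    (x : ι → S) (a : ι → ℕ) (hx : ∀ i ∈ s, x i ∈ J) :
    (∏ i ∈ s, x i ^ a i) ∈ J ^ (∑ i ∈ s, a i) := by
  rw [← Finset.prod_pow_eq_pow_sum]
  exact Ideal.prod_mem_prod fun i hi => Ideal.pow_mem_pow (hx i hi) _

lemma prod_mem_pow {S : Type*} [CommRing S] (J : Ideal S) {m : ℕ}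
    (x : Fin m → S) (hx : ∀ i, x i ∈ J) : (∏ i, x i) ∈ J ^ m := by
  have := prod_pow_mem J Finset.univ x (fun _ => 1) (fun i _ => hx i)
  simpa using this

lemma mem_mI_pow {p : R n} (hp : p ∈ homogeneousSubmodule (Fin n) ℤ k) :
    p ∈ mI n ^ k := by
  rw [mem_homogeneousSubmodule] at hp
  rw [← support_sum_monomial_coeff p]
  refine Submodule.sum_mem _ fun α hα => ?_
  have hd : (Finsupp.weight 1) α = k := hp (by simpa [mem_support_iff] using hα)
  have hmono : (monomial α (coeff α p)) = C (coeff α p) * ∏ x ∈ α.support, X x ^ α x := by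
    rw [monomial_eq]; rfl
  rw [hmono]
  refine Ideal.mul_mem_left _ _ ?_
  have hs : (∑ i ∈ α.support, α i) = k := by
    rwa [← Finsupp.degree_apply, Finsupp.degree_eq_weight_one]
  rw [← hs]
  exact prod_pow_mem _ _ _ _ fun i _ => Ideal.subset_span ⟨i, rfl⟩

/-- lower bound on degrees of monomials of elements of `mI ^ d` -/
def N (n d : ℕ) : Ideal (R n) where
  carrier := {p | ∀ α ∈ p.support, d ≤ α.degree}
  zero_mem' := by simp
  add_mem' := by
    intro a b ha hb α hα
    rcases Finset.mem_union.1 (MvPolynomial.support_add (p := a) (q := b) hα) with h | h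
    · exact ha α h
    · exact hb α h
  smul_mem' := by
    intro c p hp α hα
    have := MvPolynomial.support_mul c p hα
    rcases Finset.mem_add.1 this with ⟨β, hβ, γ, hγ, rfl⟩
    have h2 := hp γ hγ
    have : (β + γ).degree = β.degree + γ.degree := by
      simp [Finsupp.degree_eq_weight_one, map_add]
    omega

lemma mul_mem_N {d1 d2 : ℕ} {a b : R n} (ha : a ∈ N n d1) (hb : b ∈ N n d2) :
    a * b ∈ N n (d1 + d2) := by
  intro α hα
  rcases Finset.mem_add.1 (MvPolynomial.support_mul a b hα) with ⟨β, hβ, γ, hγ, rfl⟩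
  have h1 := ha β hβ
  have h2 := hb γ hγ
  have : (β + γ).degree = β.degree + γ.degree := by
    simp [Finsupp.degree_eq_weight_one, map_add]
  omega

lemma mI_le_N1 : mI n ≤ N n 1 := by
  rw [mI, Ideal.span_le]
  rintro _ ⟨i, rfl⟩
  intro α hα
  rw [MvPolynomial.support_X (R := ℤ)] at hα
  simp only [Finset.mem_singleton] at hα
  subst hα
  simp [Finsupp.degree_apply, Finsupp.support_single_ne_zero]

lemma mI_pow_le (d : ℕ) : mI n ^ d ≤ N n d := by
  induction d with
  | zero => intro p _ α _; exact Nat.zero_le _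
  | succ d ih =>
      rw [pow_succ]
      refine Ideal.mul_le.2 fun a ha b hb => ?_
      exact mul_mem_N (ih ha) (mI_le_N1 hb)

lemma hc_eq_zero_of_mem {d : ℕ} (hk : k < d) {p : R n} (hp : p ∈ mI n ^ d) :
    homogeneousComponent k p = 0 := by
  have hN := mI_pow_le d hp
  ext α
  rw [coeff_homogeneousComponent, MvPolynomial.coeff_zero]
  split_ifs with h
  · by_contra hc
    have := hN α (by simpa [mem_support_iff] using hc)
    omega
  · rfl

/- ### the group-ring side -/

lemma aug_of (g : FreeAb n) : aug (FreeAb n) (MonoidAlgebra.of ℤ (FreeAb n) g) = 1 := by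
  simp [aug]

lemma sub_one_mem (g : FreeAb n) :
    MonoidAlgebra.of ℤ (FreeAb n) g - 1 ∈ augIdeal (FreeAb n) := by
  rw [augIdeal, RingHom.mem_ker, map_sub, aug_of, map_one, sub_self]

/-- the algebra map `S(L) → ℤ[L]`, `X_i ↦ e_i - 1`. -/
def Ψ (n : ℕ) : R n →+* A n := (MvPolynomial.aeval (fun i => e n i - 1)).toRingHom

@[simp] lemma Ψ_X (i : Fin n) : Ψ n (X i) = e n i - 1 := by simp [Ψ]

lemma map_mI_le : Ideal.map (Ψ n) (mI n) ≤ augIdeal (FreeAb n) := by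
  rw [mI, Ideal.map_span, Ideal.span_le]
  rintro _ ⟨_, ⟨i, rfl⟩, rfl⟩
  simpa [e] using sub_one_mem (gen n i)

lemma Ψ_mem {d : ℕ} {p : R n} (hp : p ∈ mI n ^ d) : Ψ n p ∈ augIdeal (FreeAb n) ^ d := by
  have h1 : Ideal.map (Ψ n) (mI n ^ d) ≤ augIdeal (FreeAb n) ^ d := by
    rw [Ideal.map_pow]
    exact Ideal.pow_right_mono map_mI_le d
  exact h1 (Ideal.mem_map_of_mem _ hp)

/-- the forward map `q`. -/
def qmap (n k : ℕ) : SymPow n k →+ IQuot n k :=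
  AddMonoidHom.mk'
    (fun p => Submodule.Quotient.mk ⟨Ψ n p.1, Ψ_mem (mem_mI_pow p.2)⟩)
    (by
      intro a b
      rw [← Submodule.Quotient.mk_add]
      refine congrArg Submodule.Quotient.mk (Subtype.ext ?_)
      show Ψ n (↑a + ↑b) = Ψ n ↑a + Ψ n ↑b
      exact map_add _ _ _)

/- ### the truncated polynomial ring and the inverse map -/

abbrev B (n k : ℕ) := R n ⧸ (mI n ^ (k+1))

def mkB (n k : ℕ) : R n →+* B n k := Ideal.Quotient.mk _

lemma XB_nilp (i : Fin n) : (mkB n k (X i))^(k+1) = 0 := by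
  rw [← map_pow]
  have hX : X i ∈ mI n := Ideal.subset_span ⟨i, rfl⟩
  exact Ideal.Quotient.eq_zero_iff_mem.2 (Ideal.pow_mem_pow hX _)

lemma XB_nilp' (i : Fin n) : IsNilpotent (mkB n k (X i)) := by exact ⟨k+1, XB_nilp i⟩

def u (n k : ℕ) (i : Fin n) : (B n k)ˣ :=
  (IsNilpotent.isUnit_one_add (XB_nilp' (n := n) (k := k) i)).unit

lemma u_coe (i : Fin n) : (u n k i : B n k) = 1 + mkB n k (X i) := IsUnit.unit_spec _

def fU (n k : ℕ) : FreeAb n →* (B n k)ˣ :=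
  MonoidHom.mk' (fun g => ∏ i, u n k i ^ (Multiplicative.toAdd g i))
    (by
      intro a b
      rw [← Finset.prod_mul_distrib]
      refine Finset.prod_congr rfl fun i _ => ?_
      rw [show Multiplicative.toAdd (a * b) i
            = Multiplicative.toAdd a i + Multiplicative.toAdd b i from rfl, zpow_add])

def Φ (n k : ℕ) : A n →+* B n k :=
  ((MonoidAlgebra.lift ℤ (B n k) (FreeAb n)) ((Units.coeHom (B n k)).comp (fU n k))).toRingHom

lemma Φ_of (g : FreeAb n) : Φ n k (MonoidAlgebra.of ℤ (FreeAb n) g) = ↑(fU n k g) := by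
  show ((MonoidAlgebra.lift ℤ (B n k) (FreeAb n)) _) (MonoidAlgebra.of ℤ (FreeAb n) g) = _
  rw [MonoidAlgebra.lift_of]; rfl

lemma fU_gen (i : Fin n) : fU n k (gen n i) = u n k i := by
  show (∏ j, u n k j ^ ((Pi.single i 1 : Fin n → ℤ) j)) = u n k i
  rw [Finset.prod_eq_single i
    (fun j _ hj => by
      rw [show ((Pi.single i 1 : Fin n → ℤ) j) = 0 by
            rw [Pi.single_apply, if_neg hj], zpow_zero])
    (fun h => absurd (Finset.mem_univ i) h)]
  simp

lemma Φ_e (i : Fin n) : Φ n k (e n i) = 1 + mkB n k (X i) := by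
  rw [e, Φ_of, fU_gen, u_coe]

def mB1 (n k : ℕ) : Ideal (B n k) := Ideal.map (mkB n k) (mI n)

def π1 (n k : ℕ) : B n k →+* (B n k ⧸ mB1 n k) := Ideal.Quotient.mk _

lemma c_of (g : FreeAb n) : π1 n k (Φ n k (MonoidAlgebra.of ℤ (FreeAb n) g)) = 1 := by
  rw [Φ_of]
  have h := @hom_trivial n _ (@Units.instCommGroupUnits (B n k ⧸ mB1 n k) _) ((Units.map (π1 n k).toMonoidHom).comp (fU n k))
    (fun i => by
      apply Units.ext
      rw [MonoidHom.comp_apply, Units.coe_map, fU_gen]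
      show π1 n k ((u n k i : B n k)) = 1
      rw [u_coe, map_add, map_one]
      have hX : X i ∈ mI n := Ideal.subset_span ⟨i, rfl⟩
      have h0 : π1 n k (mkB n k (X i)) = 0 :=
        Ideal.Quotient.eq_zero_iff_mem.2 (Ideal.mem_map_of_mem _ hX)
      rw [h0, add_zero]) g
  have h2 := congrArg Units.val h
  rw [MonoidHom.comp_apply, Units.coe_map] at h2
  exact h2

lemma c_eq : (π1 n k).comp (Φ n k) = (Int.castRingHom (B n k ⧸ mB1 n k)).comp (aug (FreeAb n)) := by
  apply MonoidAlgebra.ringHom_ext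
  · intro b
    have hsingle : (MonoidAlgebra.single (1 : FreeAb n) b : A n) = algebraMap ℤ (A n) b := by
      simp [MonoidAlgebra.coe_algebraMap, MonoidAlgebra.intCast_def]
    rw [hsingle, eq_intCast]
    simp only [RingHom.comp_apply, eq_intCast, map_intCast]
  · intro g
    show π1 n k (Φ n k (MonoidAlgebra.of ℤ (FreeAb n) g))
        = (Int.castRingHom _).comp (aug (FreeAb n)) (MonoidAlgebra.of ℤ (FreeAb n) g)
    rw [c_of, RingHom.comp_apply, aug_of]
    simp

lemma Φ_mem {d : ℕ} {x : A n} (hx : x ∈ augIdeal (FreeAb n) ^ d) :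
    Φ n k x ∈ Ideal.map (mkB n k) (mI n ^ d) := by
  have hI1 : Ideal.map (Φ n k) (augIdeal (FreeAb n)) ≤ mB1 n k := by
    rw [Ideal.map_le_iff_le_comap]
    intro y hy
    rw [Ideal.mem_comap]
    have hy' : aug (FreeAb n) y = 0 := hy
    have hc := RingHom.congr_fun (c_eq (n := n) (k := k)) y
    rw [RingHom.comp_apply, RingHom.comp_apply, hy'] at hc
    simp only [Int.cast_zero, map_zero] at hc
    exact Ideal.Quotient.eq_zero_iff_mem.1 hc
  have h2 : (mB1 n k) ^ d ≤ Ideal.map (mkB n k) (mI n ^ d) := by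
    rw [mB1, ← Ideal.map_pow]
  have h3 : Ideal.map (Φ n k) (augIdeal (FreeAb n) ^ d) ≤ (mB1 n k) ^ d := by
    rw [Ideal.map_pow]
    exact Ideal.pow_right_mono hI1 d
  exact h2 (h3 (Ideal.mem_map_of_mem _ hx))

lemma Φ_eq_zero {x : A n} (hx : x ∈ augIdeal (FreeAb n) ^ (k+1)) : Φ n k x = 0 := by
  have h := Φ_mem (k := k) hx
  rw [show Ideal.map (mkB n k) (mI n ^ (k+1)) = ⊥ from Ideal.map_quotient_self _] at h
  simpa using h

def δ (n k : ℕ) : R n →ₗ[ℤ] SymPow n k :=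
  LinearMap.codRestrict (homogeneousSubmodule (Fin n) ℤ k) (homogeneousComponent k)
    (fun p => homogeneousComponent_mem k p)

def δB (n k : ℕ) : B n k →ₗ[ℤ] SymPow n k :=
  (Submodule.liftQ ((mI n ^ (k+1)).restrictScalars ℤ) (δ n k)
      (fun p hp => Subtype.ext (hc_eq_zero_of_mem (Nat.lt_succ_self k) hp))) ∘ₗ
    (Submodule.Quotient.restrictScalarsEquiv ℤ (mI n ^ (k+1))).symm.toLinearMap

lemma δB_mk (p : R n) : δB n k (mkB n k p) = δ n k p := by
  rw [δB, LinearMap.comp_apply, LinearEquiv.coe_toLinearMap,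
    show ((Submodule.Quotient.restrictScalarsEquiv ℤ (mI n ^ (k+1))).symm (mkB n k p))
        = Submodule.Quotient.mk p from Submodule.Quotient.restrictScalarsEquiv_symm_mk ℤ _ p]
  exact Submodule.liftQ_apply _ _ _

def Psub (n k : ℕ) : Submodule (A n) ↥(augIdeal (FreeAb n) ^ k) :=
  Submodule.comap (augIdeal (FreeAb n) ^ k).subtype (augIdeal (FreeAb n) ^ (k + 1))

def φ0 (n k : ℕ) : ↥(augIdeal (FreeAb n) ^ k) →+ SymPow n k :=
  (δB n k).toAddMonoidHom.comp ((Φ n k).toAddMonoidHom.comp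
    ((augIdeal (FreeAb n) ^ k).subtype.toAddMonoidHom))

def φm (n k : ℕ) : IQuot n k →+ SymPow n k :=
  ((Submodule.liftQ ((Psub n k).restrictScalars ℤ) ((φ0 n k).toIntLinearMap)
      (fun x hx => by
        show δB n k (Φ n k x.1) = 0
        rw [show Φ n k (x.1 : A n) = 0 from Φ_eq_zero hx, map_zero])) ∘ₗ
    (Submodule.Quotient.restrictScalarsEquiv ℤ (Psub n k)).symm.toLinearMap).toAddMonoidHom

lemma φm_mk (x : ↥(augIdeal (FreeAb n) ^ k)) :
    φm n k (Submodule.Quotient.mk x) = δB n k (Φ n k x.1) := by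
  rw [φm]
  erw [LinearMap.toAddMonoidHom_coe, LinearMap.comp_apply, LinearEquiv.coe_toLinearMap]

lemma ΦΨ : (Φ n k).comp (Ψ n) = mkB n k := by
  apply MvPolynomial.ringHom_ext
  · intro b
    exact RingHom.congr_fun
      (RingHom.ext_int (((Φ n k).comp (Ψ n)).comp MvPolynomial.C) ((mkB n k).comp MvPolynomial.C)) b
  · intro i
    show Φ n k (Ψ n (X i)) = mkB n k (X i)
    rw [Ψ_X, map_sub, Φ_e, map_one]
    ring

lemma phi_q (p : SymPow n k) : φm n k (qmap n k p) = p := by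
  show φm n k (Submodule.Quotient.mk _) = p
  rw [φm_mk]
  show δB n k (Φ n k (Ψ n p.1)) = p
  rw [← RingHom.comp_apply, ΦΨ, δB_mk]
  apply Subtype.ext
  show homogeneousComponent k p.1 = p.1
  rw [homogeneousComponent_of_mem p.2, if_pos rfl]

/- ### classes in `IQuot` -/

def cls {x : A n} (h : x ∈ augIdeal (FreeAb n) ^ k) : IQuot n k :=
  Submodule.Quotient.mk ⟨x, h⟩

lemma cls_eq {x y : A n} (hx : x ∈ augIdeal (FreeAb n) ^ k) (hy : y ∈ augIdeal (FreeAb n) ^ k)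
    (h : x - y ∈ augIdeal (FreeAb n) ^ (k+1)) : cls hx = cls hy := by
  apply (Submodule.Quotient.eq _).2
  exact h

/- ### a ring hom trivial on the group is the augmentation -/

lemma eq_cast_aug {S : Type*} [CommRing S] (f : A n →+* S)
    (hof : ∀ g : FreeAb n, f (MonoidAlgebra.of ℤ (FreeAb n) g) = 1) :
    f = (Int.castRingHom S).comp (aug (FreeAb n)) := by
  apply MonoidAlgebra.ringHom_ext
  · intro b
    have hsingle : (MonoidAlgebra.single (1 : FreeAb n) b : A n) = algebraMap ℤ (A n) b := by
      simp [MonoidAlgebra.coe_algebraMap, MonoidAlgebra.intCast_def]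
    rw [hsingle, eq_intCast]
    simp only [RingHom.comp_apply, eq_intCast, map_intCast]
  · intro g
    show f (MonoidAlgebra.of ℤ (FreeAb n) g)
        = (Int.castRingHom S).comp (aug (FreeAb n)) (MonoidAlgebra.of ℤ (FreeAb n) g)
    rw [hof, RingHom.comp_apply, aug_of]
    simp

/- ### the augmentation ideal is generated by `e i - 1` -/

lemma I_eq_span : augIdeal (FreeAb n) = Ideal.span (Set.range (fun i => e n i - 1)) := by
  apply le_antisymm
  · intro x hx
    set T := Ideal.span (Set.range (fun i => e n i - 1)) with hT
    set π : A n →+* A n ⧸ T := Ideal.Quotient.mk T with hπ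
    have hπe : ∀ g : FreeAb n, π (MonoidAlgebra.of ℤ (FreeAb n) g) = 1 := by
      intro g
      have hisu : ∀ h : FreeAb n, IsUnit (π (MonoidAlgebra.of ℤ (FreeAb n) h)) := by
        intro h
        refine IsUnit.of_mul_eq_one (π (MonoidAlgebra.of ℤ (FreeAb n) h⁻¹)) ?_
        rw [← map_mul, ← map_mul, mul_inv_cancel, map_one, map_one]
      have h := hom_trivial (M := (A n ⧸ T)ˣ) ((Units.map (π.toMonoidHom.comp (MonoidAlgebra.of ℤ (FreeAb n)))).comp
          (((toUnits : FreeAb n ≃* (FreeAb n)ˣ) : FreeAb n →* (FreeAb n)ˣ)))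
        (fun i => by
          apply Units.ext
          rw [MonoidHom.comp_apply, Units.coe_map]
          show π (MonoidAlgebra.of ℤ (FreeAb n) (gen n i)) = 1
          have h1 : π (e n i - 1) = 0 :=
            Ideal.Quotient.eq_zero_iff_mem.2 (Ideal.subset_span ⟨i, rfl⟩)
          rw [map_sub, map_one, sub_eq_zero] at h1
          exact h1) g
      have h2 := congrArg Units.val h
      rw [MonoidHom.comp_apply, Units.coe_map] at h2
      exact h2
    have hfeq := eq_cast_aug π hπe
    have hx0 : aug (FreeAb n) x = 0 := hx
    have : π x = 0 := by
      rw [hfeq, RingHom.comp_apply, hx0]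
      simp
    exact Ideal.Quotient.eq_zero_iff_mem.1 this
  · rw [Ideal.span_le]
    rintro _ ⟨i, rfl⟩
    exact sub_one_mem (gen n i)

/- ### `q ∘ φ = id` -/

lemma q_phi (x : A n) (h : x ∈ augIdeal (FreeAb n) ^ k) :
    qmap n k (φm n k (cls h)) = cls h := by
  have hIk : augIdeal (FreeAb n) ^ k
      = Ideal.span ((Set.range (fun i => e n i - 1)) ^ k) := by
    rw [I_eq_span, Ideal.span, Submodule.span_pow]
  have hspan : x ∈ Submodule.span (A n) ((Set.range (fun i => e n i - 1)) ^ k) := by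
    rw [← Ideal.span, ← hIk]; exact h
  refine Submodule.span_induction
    (p := fun y _ => ∀ h' : y ∈ augIdeal (FreeAb n) ^ k, qmap n k (φm n k (cls h')) = cls h')
    ?_ ?_ ?_ ?_ hspan h
  · -- mem
    intro y hy h'
    obtain ⟨f, hf⟩ := Set.mem_pow.1 hy
    choose c hc using fun j => (f j).2
    have hy' : (∏ j, (e n (c j) - 1)) = y := by
      rw [← hf, List.prod_ofFn]
      exact Finset.prod_congr rfl fun j _ => hc j
    have hP : (∏ j : Fin k, X (c j) : R n) ∈ MvPolynomial.homogeneousSubmodule (Fin n) ℤ k := by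
      rw [mem_homogeneousSubmodule]
      have := MvPolynomial.IsHomogeneous.prod Finset.univ (fun j => (X (c j) : R n))
        (fun _ => 1) (fun j _ => isHomogeneous_X _ _)
      simpa using this
    have hΨP : Ψ n (∏ j : Fin k, X (c j)) = y := by
      rw [map_prod]
      simp only [Ψ_X]
      exact hy'
    have h1 : φm n k (cls h') = ⟨∏ j : Fin k, X (c j), hP⟩ := by
      rw [cls, φm_mk]
      show δB n k (Φ n k y) = _
      rw [← hΨP, ← RingHom.comp_apply, ΦΨ, δB_mk]
      apply Subtype.ext
      show homogeneousComponent k _ = _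
      rw [homogeneousComponent_of_mem hP, if_pos rfl]
    rw [h1]
    show Submodule.Quotient.mk ⟨Ψ n (∏ j : Fin k, X (c j)), _⟩ = cls h'
    exact congrArg Submodule.Quotient.mk (Subtype.ext hΨP)
  · -- zero
    intro h'
    have h0 : cls h' = 0 := by
      rw [cls, show (⟨(0:A n), h'⟩ : ↥(augIdeal (FreeAb n) ^ k)) = 0 from rfl,
        Submodule.Quotient.mk_zero]
    rw [h0, map_zero, map_zero]
  · -- add
    intro a b ha hb iha ihb h'
    have haI : a ∈ augIdeal (FreeAb n) ^ k := by rw [hIk, Ideal.span]; exact ha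
    have hbI : b ∈ augIdeal (FreeAb n) ^ k := by rw [hIk, Ideal.span]; exact hb
    have hc : cls h' = cls haI + cls hbI := by
      rw [cls, cls, cls, ← Submodule.Quotient.mk_add]
      exact congrArg Submodule.Quotient.mk (Subtype.ext rfl)
    rw [hc, map_add, map_add, iha haI, ihb hbI]
  · -- smul
    intro a w hw ihw h'
    have hwI : w ∈ augIdeal (FreeAb n) ^ k := by rw [hIk, Ideal.span]; exact hw
    set z : ℤ := aug (FreeAb n) a with hz
    have hzw : ((z : A n)) * w ∈ augIdeal (FreeAb n) ^ k := Ideal.mul_mem_left _ _ hwI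
    have hdiff : a * w - (z : A n) * w ∈ augIdeal (FreeAb n) ^ (k+1) := by
      have hmem : a - (z : A n) ∈ augIdeal (FreeAb n) := by
        show aug (FreeAb n) (a - (z : A n)) = 0
        rw [map_sub, map_intCast, hz, Int.cast_id, sub_self]
      have := Ideal.mul_mem_mul hmem hwI
      rw [← pow_succ'] at this
      rwa [sub_mul] at this
    have h1 : cls h' = z • cls hwI := by
      have e1 : cls h' = cls hzw := by
        apply cls_eq
        exact hdiff
      rw [e1, cls, cls]
      have e2 : (⟨(z : A n) * w, hzw⟩ : ↥(augIdeal (FreeAb n) ^ k)) = z • ⟨w, hwI⟩ := by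
        apply Subtype.ext
        show (z : A n) * w = z • w
        rw [zsmul_eq_mul]
      rw [e2]
      exact Submodule.Quotient.mk_smul _ z _
    rw [h1, AddMonoidHom.map_zsmul, AddMonoidHom.map_zsmul, ihw hwI]

lemma q_phi_id (t : IQuot n k) : qmap n k (φm n k t) = t := by
  obtain ⟨⟨x, hx⟩, rfl⟩ := Submodule.Quotient.mk_surjective _ t
  exact q_phi x hx

/- ### the equivalence -/

def E (n k : ℕ) : SymPow n k ≃+ IQuot n k where
  toFun := qmap n k
  invFun := φm n k
  left_inv := phi_q
  right_inv := q_phi_id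
  map_add' := (qmap n k).map_add

/- ### linear terms -/

lemma lin_gen (i : Fin n) : lin n (gen n i) = X i := by
  rw [lin]
  rw [Finset.sum_eq_single i
    (fun j _ hj => by
      rw [show (Multiplicative.toAdd (gen n i) j) = 0 by
            show (Pi.single i 1 : Fin n → ℤ) j = 0
            rw [Pi.single_apply, if_neg hj], zero_smul])
    (fun hni => absurd (Finset.mem_univ i) hni)]
  show ((Pi.single i 1 : Fin n → ℤ) i) • (X i : R n) = X i
  simp

lemma Ψ_lin_mem (g : FreeAb n) : Ψ n (lin n g) ∈ augIdeal (FreeAb n) := by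
  rw [lin, map_sum]
  refine Submodule.sum_mem _ fun i _ => ?_
  rw [map_zsmul, zsmul_eq_mul]
  exact Ideal.mul_mem_left _ _ (by rw [Ψ_X]; exact sub_one_mem (gen n i))

lemma lin_mul (a b : FreeAb n) : lin n (a * b) = lin n a + lin n b := by
  rw [lin, lin, lin, ← Finset.sum_add_distrib]
  refine Finset.sum_congr rfl fun i _ => ?_
  rw [show Multiplicative.toAdd (a*b) i = Multiplicative.toAdd a i + Multiplicative.toAdd b i
      from rfl, add_smul]

lemma mem1 {x : A n} (h : x ∈ augIdeal (FreeAb n)) : x ∈ augIdeal (FreeAb n) ^ 1 := by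
  rwa [pow_one]

def μ (n : ℕ) : FreeAb n →* Multiplicative (IQuot n 1) :=
  MonoidHom.mk'
    (fun g => Multiplicative.ofAdd (cls (mem1 (sub_one_mem g))))
    (by
      intro a b
      apply Multiplicative.toAdd.injective
      show cls (mem1 (sub_one_mem (a*b))) = cls (mem1 (sub_one_mem a)) + cls (mem1 (sub_one_mem b))
      have hsum : (MonoidAlgebra.of ℤ (FreeAb n) a - 1) + (MonoidAlgebra.of ℤ (FreeAb n) b - 1)
          ∈ augIdeal (FreeAb n) ^ 1 :=
        Submodule.add_mem _ (mem1 (sub_one_mem a)) (mem1 (sub_one_mem b))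
      have e1 : cls (mem1 (sub_one_mem a)) + cls (mem1 (sub_one_mem b)) = cls hsum := by
        rw [cls, cls, cls, ← Submodule.Quotient.mk_add]
        exact congrArg Submodule.Quotient.mk (Subtype.ext rfl)
      rw [e1]
      apply cls_eq
      have : MonoidAlgebra.of ℤ (FreeAb n) (a*b) - 1
          - ((MonoidAlgebra.of ℤ (FreeAb n) a - 1) + (MonoidAlgebra.of ℤ (FreeAb n) b - 1))
          = (MonoidAlgebra.of ℤ (FreeAb n) a - 1) * (MonoidAlgebra.of ℤ (FreeAb n) b - 1) := by
        rw [map_mul]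
        ring
      rw [this]
      have := Ideal.mul_mem_mul (sub_one_mem a) (mem1 (sub_one_mem b))
      rwa [← pow_succ'] at this)

def ν (n : ℕ) : FreeAb n →* Multiplicative (IQuot n 1) :=
  MonoidHom.mk'
    (fun g => Multiplicative.ofAdd (cls (mem1 (Ψ_lin_mem g))))
    (by
      intro a b
      apply Multiplicative.toAdd.injective
      show cls (mem1 (Ψ_lin_mem (a*b))) = cls (mem1 (Ψ_lin_mem a)) + cls (mem1 (Ψ_lin_mem b))
      have hsum : Ψ n (lin n a) + Ψ n (lin n b) ∈ augIdeal (FreeAb n) ^ 1 :=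
        Submodule.add_mem _ (mem1 (Ψ_lin_mem a)) (mem1 (Ψ_lin_mem b))
      have e1 : cls (mem1 (Ψ_lin_mem a)) + cls (mem1 (Ψ_lin_mem b)) = cls hsum := by
        rw [cls, cls, cls, ← Submodule.Quotient.mk_add]
        exact congrArg Submodule.Quotient.mk (Subtype.ext rfl)
      rw [e1]
      apply cls_eq
      rw [lin_mul, map_add]
      simp)

lemma mu_nu (g : FreeAb n) :
    MonoidAlgebra.of ℤ (FreeAb n) g - 1 - Ψ n (lin n g) ∈ augIdeal (FreeAb n) ^ 2 := by
  have h := hom_trivial (μ n * (ν n)⁻¹)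
    (fun i => by
      show μ n (gen n i) * (ν n (gen n i))⁻¹ = 1
      rw [mul_inv_eq_one]
      show Multiplicative.ofAdd (cls _) = Multiplicative.ofAdd (cls _)
      apply congrArg
      rw [cls, cls]
      refine congrArg Submodule.Quotient.mk (Subtype.ext ?_)
      show MonoidAlgebra.of ℤ (FreeAb n) (gen n i) - 1 = Ψ n (lin n (gen n i))
      rw [lin_gen, Ψ_X]
      rfl) g
  rw [MonoidHom.mul_apply, MonoidHom.inv_apply, mul_inv_eq_one] at h
  have h2 : cls (mem1 (sub_one_mem g)) = cls (mem1 (Ψ_lin_mem g)) :=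
    Multiplicative.ofAdd.injective h
  have h3 := (Submodule.Quotient.eq _).1 h2
  exact h3

/- ### products and differences -/

lemma prod_sub_prod_mem {m : ℕ} (x y : Fin m → A n)
    (hx : ∀ j, x j ∈ augIdeal (FreeAb n)) (hy : ∀ j, y j ∈ augIdeal (FreeAb n))
    (hxy : ∀ j, x j - y j ∈ augIdeal (FreeAb n) ^ 2) :
    (∏ j, x j) - (∏ j, y j) ∈ augIdeal (FreeAb n) ^ (m+1) := by
  induction m with
  | zero => simp
  | succ m ih =>
    rw [Fin.prod_univ_succ, Fin.prod_univ_succ]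
    have key : x 0 * ∏ j, x (Fin.succ j) - y 0 * ∏ j, y (Fin.succ j)
        = x 0 * ((∏ j, x (Fin.succ j)) - ∏ j, y (Fin.succ j))
          + (x 0 - y 0) * ∏ j, y (Fin.succ j) := by ring
    rw [key]
    refine Submodule.add_mem _ ?_ ?_
    · have h1 := ih (fun j => x j.succ) (fun j => y j.succ)
        (fun j => hx _) (fun j => hy _) (fun j => hxy _)
      have := Ideal.mul_mem_mul (hx 0) h1
      rwa [← pow_succ'] at this
    · have h2 : (∏ j, y (Fin.succ j)) ∈ augIdeal (FreeAb n) ^ m :=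
        prod_mem_pow _ _ (fun j => hy _)
      have := Ideal.mul_mem_mul (hxy 0) h2
      rwa [← pow_add, show 2 + m = m + 1 + 1 from by omega] at this

end
end Stmt11Aux


/-- for `L` free abelian of rank `n` and `I` the augmentation ideal
of `ℤ[L]`, the natural homomorphism `q_k : S^k(L) → I^k/I^{k+1}`,
`l₁⋯l_k ↦ [(l₁−1)⋯(l_k−1)]`, is an isomorphism of abelian groups. -/
theorem stmt11 (n k : ℕ) :
    ∃ q : SymPow n k ≃+ IQuot n k,
      ∀ (l : Fin k → FreeAb n)
        (hm : (∏ j, lin n (l j)) ∈ MvPolynomial.homogeneousSubmodule (Fin n) ℤ k)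
        (hI : (∏ j, (MonoidAlgebra.of ℤ (FreeAb n) (l j) - 1)) ∈ augIdeal (FreeAb n) ^ k),
        q ⟨∏ j, lin n (l j), hm⟩ =
          Submodule.Quotient.mk ⟨∏ j, (MonoidAlgebra.of ℤ (FreeAb n) (l j) - 1), hI⟩ := by
  refine ⟨Stmt11Aux.E n k, ?_⟩
  intro l hm hI
  show Stmt11Aux.qmap n k ⟨∏ j, lin n (l j), hm⟩ = Stmt11Aux.cls hI
  show Stmt11Aux.cls (Stmt11Aux.Ψ_mem (Stmt11Aux.mem_mI_pow hm)) = Stmt11Aux.cls hI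
  apply Stmt11Aux.cls_eq
  rw [map_prod]
  exact Stmt11Aux.prod_sub_prod_mem _ _
    (fun j => Stmt11Aux.Ψ_lin_mem (l j))
    (fun j => Stmt11Aux.sub_one_mem (l j))
    (fun j => by
      have hneg := Submodule.neg_mem _ (Stmt11Aux.mu_nu (l j))
      rwa [neg_sub] at hneg)
end

section
/- Let F be a finitely generated free group with basis z₁,…,z_n, let η be a normal subgroup of F, and let 𝔮 : ℤ[F] → ℤ[F/η] be the ring homomorphism induced by the quotient map. Then for any word w ∈ F, w lies in the commutator subgroup η' = [η,η] if and only if 𝔮(∂w/∂z_i) = 0 in ℤ[F/η] for all i = 1,…,n, where ∂/∂z_i denotes Fox free differentiation. -/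
open MonoidAlgebra

/-- The ring homomorphism `𝔮 : ℤ[F] → ℤ[F/η]` induced by the canonical
projection `F → F/η`. -/
noncomputable def quotRingHom (n : ℕ) (η : Subgroup (FreeGroup (Fin n))) [η.Normal] :
    MonoidAlgebra ℤ (FreeGroup (Fin n)) →+* MonoidAlgebra ℤ (FreeGroup (Fin n) ⧸ η) :=
  ((MonoidAlgebra.lift ℤ (MonoidAlgebra ℤ (FreeGroup (Fin n) ⧸ η)) (FreeGroup (Fin n)))
    ((MonoidAlgebra.of ℤ (FreeGroup (Fin n) ⧸ η)).comp (QuotientGroup.mk' η))).toRingHom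

namespace Stmt13Aux

variable {G : Type*} [Group G] (η : Subgroup G) [η.Normal]

/-- `g ↦ g ⋅ (representative of gη)⁻¹ ∈ η`. -/
noncomputable def rho (g : G) : η :=
  ⟨g * ((g : G ⧸ η).out)⁻¹, by
    have h : ((g : G ⧸ η).out : G ⧸ η) = (g : G ⧸ η) := QuotientGroup.out_eq' _
    have h2 : g⁻¹ * (g : G ⧸ η).out ∈ η := QuotientGroup.eq.mp h.symm
    have h3 : g * (g⁻¹ * (g : G ⧸ η).out) * g⁻¹ ∈ η := Subgroup.Normal.conj_mem ‹η.Normal› _ h2 g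
    have : g * (g⁻¹ * (g : G ⧸ η).out) * g⁻¹ = ((g : G ⧸ η).out) * g⁻¹ := by group
    rw [this] at h3
    have := η.inv_mem h3
    simpa using this⟩

@[simp] lemma rho_coe (g : G) : (rho η g : G) = g * ((g : G ⧸ η).out)⁻¹ := rfl

/-- The map `g ↦ [g ⋅ rep(gη)⁻¹]` into the (additivized) abelianization of `η`. -/
noncomputable def piA (g : G) : Additive (Abelianization η) :=
  Additive.ofMul (Abelianization.of (rho η g))

lemma piA_eq (g g' x : G) (h : (g : G ⧸ η) = (g' : G ⧸ η)) :
    piA η (g * x) + piA η g' = piA η (g' * x) + piA η g := by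
  have hs : g' * g⁻¹ ∈ η := by
    have h2 : g⁻¹ * g' ∈ η := QuotientGroup.eq.mp h
    have h3 : g * (g⁻¹ * g') * g⁻¹ ∈ η := Subgroup.Normal.conj_mem ‹η.Normal› _ h2 g
    simpa [mul_assoc] using h3
  set s : η := ⟨g' * g⁻¹, hs⟩ with hs_def
  have e1 : ((g' * x : G) : G ⧸ η) = ((g * x : G) : G ⧸ η) := by
    rw [QuotientGroup.mk_mul, QuotientGroup.mk_mul, h]
  have h1 : rho η (g' * x) = s * rho η (g * x) := by
    apply Subtype.ext
    simp only [rho_coe, Subgroup.coe_mul, hs_def, e1]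
    group
  have h2 : rho η g' = s * rho η g := by
    apply Subtype.ext
    simp only [rho_coe, Subgroup.coe_mul, hs_def, h]
    group
  simp only [piA, h1, h2, map_mul, ofMul_mul]
  abel

end Stmt13Aux

namespace Stmt13Aux2

variable {G : Type*} [Group G] (η : Subgroup G) [η.Normal]
open Stmt13Aux

/-- `ℤ`-linear extension of `piA`. -/
noncomputable def sigma : MonoidAlgebra ℤ G →+ Additive (Abelianization η) :=
  (Finsupp.liftAddHom fun g => zmultiplesHom _ (piA η g)).comp
    MonoidAlgebra.coeffAddEquiv.toAddMonoidHom

@[simp] lemma sigma_single (g : G) (c : ℤ) :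
    sigma η (MonoidAlgebra.single g c) = c • piA η g :=
  Finsupp.liftAddHom_apply_single _ _ _

lemma sigma_mul_sub (x : G) (a : MonoidAlgebra ℤ G)
    (Q : MonoidAlgebra ℤ G →+* MonoidAlgebra ℤ (G ⧸ η))
    (hQ : ∀ (g : G) (c : ℤ), Q (MonoidAlgebra.single g c) = MonoidAlgebra.single (↑g) c)
    (ha : Q a = 0) :
    sigma η (a * (MonoidAlgebra.of ℤ G x - 1)) = 0 := by
  classical
  set Ψ : MonoidAlgebra ℤ (G ⧸ η) →+ Additive (Abelianization η) :=
    (Finsupp.liftAddHom fun c : G ⧸ η => zmultiplesHom _ (piA η (c.out * x) - piA η c.out)).comp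
      MonoidAlgebra.coeffAddEquiv.toAddMonoidHom with hΨ
  have hΨs : ∀ (q : G ⧸ η) (c : ℤ), Ψ (MonoidAlgebra.single q c)
      = zmultiplesHom _ (piA η (q.out * x) - piA η q.out) c :=
    fun q c => Finsupp.liftAddHom_apply_single _ _ _
  have main : (sigma η (G := G)).comp (AddMonoidHom.mulRight (MonoidAlgebra.of ℤ G x - 1))
      = Ψ.comp Q.toAddMonoidHom := by
    apply MonoidAlgebra.addMonoidHom_ext
    intro g c
    have e1 : (MonoidAlgebra.single g c : MonoidAlgebra ℤ G) * (MonoidAlgebra.of ℤ G x - 1)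
        = (MonoidAlgebra.single (g * x) c : MonoidAlgebra ℤ G) - (MonoidAlgebra.single g c : MonoidAlgebra ℤ G) := by
      rw [mul_sub, mul_one, MonoidAlgebra.of_apply, MonoidAlgebra.single_mul_single, mul_one]
    have e2 : ((g : G ⧸ η)) = (((g : G ⧸ η).out : G) : G ⧸ η) := (QuotientGroup.out_eq' _).symm
    have e3 : piA η (g * x) - piA η g
        = piA η ((g : G ⧸ η).out * x) - piA η (g : G ⧸ η).out := by
      rw [sub_eq_sub_iff_add_eq_add]
      exact piA_eq η g ((g : G ⧸ η).out) x e2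
    show sigma η ((MonoidAlgebra.single g c : MonoidAlgebra ℤ G) * (MonoidAlgebra.of ℤ G x - 1))
        = Ψ (Q (MonoidAlgebra.single g c))
    rw [e1, map_sub, sigma_single, sigma_single, hQ, hΨs]
    rw [zmultiplesHom_apply, ← smul_sub, e3]
  have h := DFunLike.congr_fun main a
  simp only [AddMonoidHom.comp_apply, AddMonoidHom.mulRight_apply,
    RingHom.toAddMonoidHom_eq_coe, AddMonoidHom.coe_coe] at h
  rw [h, ha, map_zero]

end Stmt13Aux2

section FoxMain
open Stmt13Aux Stmt13Aux2

variable {n : ℕ}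

private lemma foxD1 (D : Fin n → FreeGroup (Fin n) → MonoidAlgebra ℤ (FreeGroup (Fin n)))
    (hDmul : ∀ i (u v : FreeGroup (Fin n)),
      D i (u * v) = D i u + MonoidAlgebra.of ℤ (FreeGroup (Fin n)) u * D i v)
    (i : Fin n) : D i 1 = 0 := by
  have h := hDmul i 1 1
  rw [one_mul, map_one, one_mul] at h
  exact (left_eq_add.mp h)

private lemma foxDinv (D : Fin n → FreeGroup (Fin n) → MonoidAlgebra ℤ (FreeGroup (Fin n)))
    (hDmul : ∀ i (u v : FreeGroup (Fin n)),
      D i (u * v) = D i u + MonoidAlgebra.of ℤ (FreeGroup (Fin n)) u * D i v)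
    (i : Fin n) (u : FreeGroup (Fin n)) :
    D i u⁻¹ = -(MonoidAlgebra.of ℤ (FreeGroup (Fin n)) u⁻¹ * D i u) := by
  have h := hDmul i u⁻¹ u
  rw [inv_mul_cancel, foxD1 D hDmul] at h
  exact eq_neg_of_add_eq_zero_left h.symm

private lemma foxFund (D : Fin n → FreeGroup (Fin n) → MonoidAlgebra ℤ (FreeGroup (Fin n)))
    (hDgen : ∀ i j, D i (FreeGroup.of j) = if i = j then 1 else 0)
    (hDmul : ∀ i (u v : FreeGroup (Fin n)),
      D i (u * v) = D i u + MonoidAlgebra.of ℤ (FreeGroup (Fin n)) u * D i v)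
    (u : FreeGroup (Fin n)) :
    MonoidAlgebra.of ℤ (FreeGroup (Fin n)) u
      = 1 + ∑ i, D i u * (MonoidAlgebra.of ℤ (FreeGroup (Fin n)) (FreeGroup.of i) - 1) := by
  induction u using FreeGroup.induction_on with
  | C1 => simp [foxD1 D hDmul, MonoidAlgebra.one_def]
  | of j =>
    show MonoidAlgebra.of ℤ (FreeGroup (Fin n)) (FreeGroup.of j)
      = 1 + ∑ i, D i (FreeGroup.of j)
          * (MonoidAlgebra.of ℤ (FreeGroup (Fin n)) (FreeGroup.of i) - 1)
    rw [Finset.sum_congr rfl (fun i _ => by rw [hDgen i j, ite_mul, one_mul, zero_mul])]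
    rw [Finset.sum_ite_eq' Finset.univ j
      (fun i => MonoidAlgebra.of ℤ (FreeGroup (Fin n)) (FreeGroup.of i) - 1)]
    simp
  | inv_of j ih =>
    show MonoidAlgebra.of ℤ (FreeGroup (Fin n)) (FreeGroup.of j)⁻¹
      = 1 + ∑ i, D i (FreeGroup.of j)⁻¹
          * (MonoidAlgebra.of ℤ (FreeGroup (Fin n)) (FreeGroup.of i) - 1)
    have ih' : MonoidAlgebra.of ℤ (FreeGroup (Fin n)) (FreeGroup.of j)
        = 1 + ∑ i, D i (FreeGroup.of j)
            * (MonoidAlgebra.of ℤ (FreeGroup (Fin n)) (FreeGroup.of i) - 1) := ih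
    have hS : ∑ i, D i (FreeGroup.of j)
          * (MonoidAlgebra.of ℤ (FreeGroup (Fin n)) (FreeGroup.of i) - 1)
        = MonoidAlgebra.of ℤ (FreeGroup (Fin n)) (FreeGroup.of j) - 1 := by rw [ih']; abel
    calc MonoidAlgebra.of ℤ (FreeGroup (Fin n)) (FreeGroup.of j)⁻¹
        = 1 + (-(MonoidAlgebra.of ℤ (FreeGroup (Fin n)) (FreeGroup.of j)⁻¹
            * (MonoidAlgebra.of ℤ (FreeGroup (Fin n)) (FreeGroup.of j) - 1))) := by
          rw [mul_sub, mul_one, ← map_mul, inv_mul_cancel, map_one]; abel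
      _ = 1 + ∑ i, D i (FreeGroup.of j)⁻¹
            * (MonoidAlgebra.of ℤ (FreeGroup (Fin n)) (FreeGroup.of i) - 1) := by
          rw [← hS, Finset.mul_sum, ← Finset.sum_neg_distrib]
          congr 1
          refine Finset.sum_congr rfl fun i _ => ?_
          rw [foxDinv D hDmul i (FreeGroup.of j), neg_mul, mul_assoc]
  | mul u v ihu ihv =>
    have hsum : ∑ i, D i (u * v)
          * (MonoidAlgebra.of ℤ (FreeGroup (Fin n)) (FreeGroup.of i) - 1)
        = (∑ i, D i u * (MonoidAlgebra.of ℤ (FreeGroup (Fin n)) (FreeGroup.of i) - 1))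
          + MonoidAlgebra.of ℤ (FreeGroup (Fin n)) u
            * ∑ i, D i v * (MonoidAlgebra.of ℤ (FreeGroup (Fin n)) (FreeGroup.of i) - 1) := by
      rw [Finset.mul_sum, ← Finset.sum_add_distrib]
      refine Finset.sum_congr rfl fun i _ => ?_
      rw [hDmul, add_mul, mul_assoc]
    rw [map_mul, hsum, ihu, ihv]
    noncomm_ring

end FoxMain

open Stmt13Aux Stmt13Aux2

/-- let `F` be the free group on `z₁,…,zₙ`, `η` a normal subgroup
of `F`, `𝔮 : ℤ[F] → ℤ[F/η]` the induced ring homomorphism, and `D i` the Fox free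
derivatives `∂/∂z_i` (characterized by `∂z_j/∂z_i = δ_{ij}` and the Leibniz rule
`∂(uv)/∂z_i = ∂u/∂z_i + u·∂v/∂z_i`). Then for any `w ∈ F`, `w ∈ η' = [η,η]` if
and only if `𝔮(∂w/∂z_i) = 0` for all `i`. -/
theorem stmt13 (n : ℕ) (η : Subgroup (FreeGroup (Fin n))) [η.Normal]
    (D : Fin n → FreeGroup (Fin n) → MonoidAlgebra ℤ (FreeGroup (Fin n)))
    (hDgen : ∀ i j, D i (FreeGroup.of j) = if i = j then 1 else 0)
    (hDmul : ∀ i (u v : FreeGroup (Fin n)),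
      D i (u * v) = D i u + MonoidAlgebra.of ℤ (FreeGroup (Fin n)) u * D i v)
    (w : FreeGroup (Fin n)) :
    w ∈ ⁅η, η⁆ ↔ ∀ i : Fin n, quotRingHom n η (D i w) = 0 := by
  classical
  have hq_of : ∀ g : FreeGroup (Fin n), quotRingHom n η (MonoidAlgebra.of ℤ _ g)
      = MonoidAlgebra.of ℤ (FreeGroup (Fin n) ⧸ η) (↑g) := by
    intro g
    simp [quotRingHom, MonoidAlgebra.lift_of]
  have hq_single : ∀ (g : FreeGroup (Fin n)) (c : ℤ),
      quotRingHom n η (MonoidAlgebra.single g c)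
        = MonoidAlgebra.single (↑g : FreeGroup (Fin n) ⧸ η) c := by
    intro g c
    have h1 : (MonoidAlgebra.single g c : MonoidAlgebra ℤ (FreeGroup (Fin n)))
        = c • MonoidAlgebra.of ℤ _ g := by
      rw [MonoidAlgebra.of_apply, MonoidAlgebra.smul_single, smul_eq_mul, mul_one]
    have h2 : (MonoidAlgebra.single (↑g : FreeGroup (Fin n) ⧸ η) c :
          MonoidAlgebra ℤ (FreeGroup (Fin n) ⧸ η))
        = c • MonoidAlgebra.of ℤ _ (↑g : FreeGroup (Fin n) ⧸ η) := by
      rw [MonoidAlgebra.of_apply, MonoidAlgebra.smul_single, smul_eq_mul, mul_one]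
    rw [h1, map_zsmul, hq_of, h2]
  have hmap : Subgroup.map η.subtype (commutator ↥η) = ⁅η, η⁆ := by
    rw [commutator_def, Subgroup.map_commutator, ← MonoidHom.range_eq_map,
      Subgroup.range_subtype]
  constructor
  · -- forward direction
    intro hw i
    have hw' : w ∈ Subgroup.map η.subtype (commutator ↥η) := hmap ▸ hw
    obtain ⟨u, hu, huw⟩ := hw'
    let φ : ↥η →* Multiplicative (MonoidAlgebra ℤ (FreeGroup (Fin n) ⧸ η)) :=
      { toFun := fun v => Multiplicative.ofAdd (quotRingHom n η (D i ↑v)),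
        map_one' := by simp [foxD1 D hDmul i],
        map_mul' := by
          intro u v
          have hqu : quotRingHom n η (MonoidAlgebra.of ℤ _ (↑u : FreeGroup (Fin n))) = 1 := by
            rw [hq_of, (QuotientGroup.eq_one_iff _).mpr u.2, map_one]
          simp only [Subgroup.coe_mul, hDmul, map_add, map_mul, hqu, one_mul]
          rfl }
    have hker : φ u = 1 := Abelianization.commutator_subset_ker φ hu
    have : Multiplicative.ofAdd (quotRingHom n η (D i ↑u)) = Multiplicative.ofAdd 0 := hker
    have huw' : (↑u : FreeGroup (Fin n)) = w := huw
    rw [huw'] at this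
    exact Multiplicative.ofAdd.injective this
  · -- reverse direction
    intro hq
    -- Step 1: `w ∈ η`.
    have h1 : quotRingHom n η (MonoidAlgebra.of ℤ _ w) = 1 := by
      rw [foxFund D hDgen hDmul w, map_add, map_one, map_sum]
      rw [Finset.sum_eq_zero fun i _ => by rw [map_mul, hq i, zero_mul]]
      rw [add_zero]
    have hwη : w ∈ η := by
      have h2 : MonoidAlgebra.of ℤ (FreeGroup (Fin n) ⧸ η) (↑w)
          = MonoidAlgebra.of ℤ (FreeGroup (Fin n) ⧸ η) 1 := by
        rw [← hq_of, h1, map_one]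
      exact (QuotientGroup.eq_one_iff w).mp (MonoidAlgebra.of_injective h2)
    -- Step 2: `σ` kills `of w - 1`, hence `w` dies in the abelianization of `η`.
    have h3 : sigma η (MonoidAlgebra.of ℤ _ w) = sigma η 1 := by
      have h4 : (MonoidAlgebra.of ℤ (FreeGroup (Fin n)) w : MonoidAlgebra ℤ (FreeGroup (Fin n)))
          = 1 + ∑ i, D i w * (MonoidAlgebra.of ℤ _ (FreeGroup.of i) - 1) :=
        foxFund D hDgen hDmul w
      rw [h4, map_add, map_sum]
      rw [Finset.sum_eq_zero fun i _ =>
        sigma_mul_sub η (FreeGroup.of i) (D i w) (quotRingHom n η) hq_single (hq i)]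
      rw [add_zero]
    have h5 : piA η w = piA η 1 := by
      have e1 : (MonoidAlgebra.of ℤ (FreeGroup (Fin n)) w)
          = MonoidAlgebra.single w (1 : ℤ) := rfl
      have e2 : (1 : MonoidAlgebra ℤ (FreeGroup (Fin n)))
          = MonoidAlgebra.single 1 (1 : ℤ) := MonoidAlgebra.one_def
      rw [e1, e2] at h3
      simpa using h3
    -- Step 3: conclude.
    have hout : ((w : FreeGroup (Fin n) ⧸ η)).out = ((1 : FreeGroup (Fin n)) :
        FreeGroup (Fin n) ⧸ η).out := by
      rw [(QuotientGroup.eq_one_iff w).mpr hwη, QuotientGroup.mk_one]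
    have hrho : rho η w * (rho η 1)⁻¹ = ⟨w, hwη⟩ := by
      apply Subtype.ext
      simp only [Subgroup.coe_mul, InvMemClass.coe_inv, rho_coe, hout]
      group
    have h6 : Abelianization.of (rho η w) = Abelianization.of (rho η 1) :=
      Additive.ofMul.injective h5
    have h7 : Abelianization.of (⟨w, hwη⟩ : ↥η) = 1 := by
      rw [← hrho, map_mul, map_inv, h6, mul_inv_cancel]
    have h8 : (⟨w, hwη⟩ : ↥η) ∈ commutator ↥η :=
      (QuotientGroup.eq_one_iff _).mp h7
    rw [← hmap]
    exact ⟨⟨w, hwη⟩, h8, rfl⟩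
end

section
/- Let F be a free group on z₁,…,z_n, let A be an abelian group, let ψ : F → A be a homomorphism extended to a ring map ψ : ℤ[F] → ℤ[A], and let c ≥ 1. If γ ∈ F lies in the (c+1)-st term F_{c+1} of the lower central series of F, then ψ(∂γ/∂z_i) − aug(ψ(∂γ/∂z_i)) ∈ I^c and in fact ψ(∂γ/∂z_i) ∈ aug(∂γ/∂z_i) + I^c ⊆ ℤ[A], where I is the augmentation ideal of ℤ[A]; in particular for c = 1 (γ ∈ [F,F]) one gets ψ(∂γ/∂z_i) ∈ I for all i. -/
open MonoidAlgebra

/-- The ring homomorphism `ℤ[F] → ℤ[A]` induced by a group homomorphism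
`ψ : F → A`. -/
noncomputable def indRingHom (n : ℕ) (A : Type*) [CommGroup A]
    (ψ : FreeGroup (Fin n) →* A) :
    MonoidAlgebra ℤ (FreeGroup (Fin n)) →+* MonoidAlgebra ℤ A :=
  ((MonoidAlgebra.lift ℤ (MonoidAlgebra ℤ A) (FreeGroup (Fin n)))
    ((MonoidAlgebra.of ℤ A).comp ψ)).toRingHom

/-- let `F` be the free group on `z₁,…,zₙ` with Fox derivatives
`∂/∂z_i`, let `ψ : F → A` be a homomorphism to an abelian group extended to
`ψ : ℤ[F] → ℤ[A]`, and let `c ≥ 1`. If `γ` belongs to the `(c+1)`-st lower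
central series subgroup `F_{c+1}` (here `lowerCentralSeries F c`, since
`F₁ = F = lowerCentralSeries F 0`), then for every `i`:
`ψ(∂γ/∂z_i) − aug(ψ(∂γ/∂z_i)) ∈ I^c` and `ψ(∂γ/∂z_i) − aug(∂γ/∂z_i) ∈ I^c`,
where `I` is the augmentation ideal of `ℤ[A]`. In particular for `c = 1`
(`γ ∈ [F,F]`, `aug(∂γ/∂z_i) = 0`) one gets `ψ(∂γ/∂z_i) ∈ I` for all `i`. -/
theorem stmt15 (n : ℕ) (A : Type*) [CommGroup A] (ψ : FreeGroup (Fin n) →* A)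
    (D : Fin n → FreeGroup (Fin n) → MonoidAlgebra ℤ (FreeGroup (Fin n)))
    (hDgen : ∀ i j, D i (FreeGroup.of j) = if i = j then 1 else 0)
    (hDmul : ∀ i (u v : FreeGroup (Fin n)),
      D i (u * v) = D i u + MonoidAlgebra.of ℤ (FreeGroup (Fin n)) u * D i v)
    (c : ℕ) (hc : 1 ≤ c)
    (γ : FreeGroup (Fin n)) (hγ : γ ∈ (⊤ : Subgroup (FreeGroup (Fin n))).lowerCentralSeries c) :
    ∀ i : Fin n,
      (indRingHom n A ψ (D i γ) -
          ((aug A (indRingHom n A ψ (D i γ)) : ℤ) : MonoidAlgebra ℤ A) ∈ augIdeal A ^ c) ∧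
      (indRingHom n A ψ (D i γ) -
          ((aug (FreeGroup (Fin n)) (D i γ) : ℤ) : MonoidAlgebra ℤ A) ∈ augIdeal A ^ c) := by
  classical
  set φ := indRingHom n A ψ with hφ
  set I := augIdeal A with hI
  have hφof : ∀ u : FreeGroup (Fin n),
      φ (MonoidAlgebra.of ℤ (FreeGroup (Fin n)) u) = MonoidAlgebra.of ℤ A (ψ u) := by
    intro u
    simp [hφ, indRingHom]
  have hφof' : ∀ u : FreeGroup (Fin n),
      φ (MonoidAlgebra.single u (1 : ℤ)) = MonoidAlgebra.single (ψ u) (1 : ℤ) := by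
    intro u
    simpa [MonoidAlgebra.of_apply] using hφof u
  have haugof : ∀ a : A, aug A (MonoidAlgebra.of ℤ A a) = 1 := by
    intro a
    simp [aug]
  have hD1 : ∀ i, D i (1 : FreeGroup (Fin n)) = 0 := by
    intro i
    have h := hDmul i 1 1
    simp only [mul_one, map_one, one_mul] at h
    have h2 : D i (1 : FreeGroup (Fin n)) + 0 = D i 1 + D i 1 := by rw [add_zero]; exact h
    exact (add_left_cancel h2).symm
  have hmulψ : ∀ i (u v : FreeGroup (Fin n)), φ (D i (u * v)) =
      φ (D i u) + MonoidAlgebra.of ℤ A (ψ u) * φ (D i v) := by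
    intro i u v
    rw [hDmul]
    simp only [map_add, map_mul, MonoidAlgebra.of_apply]
    rw [hφof']
  have hpair : ∀ u : FreeGroup (Fin n),
      MonoidAlgebra.of ℤ A (ψ u) * MonoidAlgebra.of ℤ A (ψ u⁻¹) = 1 := by
    intro u
    rw [← map_mul, ← map_mul]
    simp [MonoidAlgebra.one_def]
  have hinvψ : ∀ i (u : FreeGroup (Fin n)), φ (D i u⁻¹) =
      MonoidAlgebra.of ℤ A (ψ u⁻¹) * (- φ (D i u)) := by
    intro i u
    have h := hmulψ i u u⁻¹
    rw [mul_inv_cancel, hD1, map_zero] at h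
    have h2 : MonoidAlgebra.of ℤ A (ψ u) * φ (D i u⁻¹) = - φ (D i u) :=
      eq_neg_of_add_eq_zero_right h.symm
    calc φ (D i u⁻¹)
        = (MonoidAlgebra.of ℤ A (ψ u⁻¹) * MonoidAlgebra.of ℤ A (ψ u)) * φ (D i u⁻¹) := by
          rw [mul_comm (MonoidAlgebra.of ℤ A (ψ u⁻¹)), hpair, one_mul]
      _ = MonoidAlgebra.of ℤ A (ψ u⁻¹) * (MonoidAlgebra.of ℤ A (ψ u) * φ (D i u⁻¹)) := by ring
      _ = MonoidAlgebra.of ℤ A (ψ u⁻¹) * (- φ (D i u)) := by rw [h2]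
  have hcomm : ∀ i (u v : FreeGroup (Fin n)), φ (D i (u * v * u⁻¹ * v⁻¹)) =
      (1 - MonoidAlgebra.of ℤ A (ψ v)) * φ (D i u) +
      (MonoidAlgebra.of ℤ A (ψ u) - 1) * φ (D i v) := by
    intro i u v
    rw [hmulψ, hmulψ, hmulψ, hinvψ, hinvψ]
    have h1 := hpair u
    have h2 := hpair v
    simp only [map_mul]
    linear_combination (-(MonoidAlgebra.of ℤ A (ψ v) * φ (D i u)) -
        MonoidAlgebra.of ℤ A (ψ v) * MonoidAlgebra.of ℤ A (ψ v⁻¹) * φ (D i v)) * h1 +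
      (- φ (D i v)) * h2
  have hmemI : ∀ a : A, (1 : MonoidAlgebra ℤ A) - MonoidAlgebra.of ℤ A a ∈ I := by
    intro a
    have : aug A ((1 : MonoidAlgebra ℤ A) - MonoidAlgebra.of ℤ A a) = 0 := by
      rw [map_sub, map_one, haugof, sub_self]
    simpa [hI, augIdeal, RingHom.mem_ker] using this
  have key : ∀ k : ℕ, ∀ γ' ∈ (⊤ : Subgroup (FreeGroup (Fin n))).lowerCentralSeries k, ∀ i,
      φ (D i γ') ∈ I ^ k := by
    intro k
    induction k with
    | zero => intro γ' _ i; simp [Ideal.one_eq_top]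
    | succ k ih =>
      intro γ' hγ' i
      rw [Subgroup.lowerCentralSeries_succ] at hγ'
      refine Subgroup.closure_induction ?_ ?_ ?_ ?_ hγ'
      · rintro x ⟨u, hu, v, -, rfl⟩
        rw [commutatorElement_def, hcomm]
        refine Ideal.add_mem _ ?_ ?_
        · have h1 : (1 : MonoidAlgebra ℤ A) - MonoidAlgebra.of ℤ A (ψ v) ∈ I := hmemI _
          have h2 : φ (D i u) ∈ I ^ k := ih u hu i
          rw [pow_succ']
          exact Ideal.mul_mem_mul h1 h2
        · rcases Nat.eq_zero_or_pos k with hk | hk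
          · subst hk
            rw [pow_one]
            have h3 : MonoidAlgebra.of ℤ A (ψ u) - 1 ∈ I := by
              have h4 : MonoidAlgebra.of ℤ A (ψ u) - 1 =
                  -((1 : MonoidAlgebra ℤ A) - MonoidAlgebra.of ℤ A (ψ u)) := by ring
              rw [h4]
              exact neg_mem (hmemI (ψ u))
            exact Ideal.mul_mem_right _ _ h3
          · have hu1 : ψ u = 1 := by
              have hsub : (⊤ : Subgroup (FreeGroup (Fin n))).lowerCentralSeries k ≤
                  (⊤ : Subgroup (FreeGroup (Fin n))).lowerCentralSeries 1 := Subgroup.lowerCentralSeries_antitone _ hk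
              have hu' : u ∈ commutator (FreeGroup (Fin n)) := by
                rw [← Subgroup.top_lowerCentralSeries_one]
                exact hsub hu
              exact Abelianization.commutator_subset_ker ψ hu'
            rw [hu1, map_one, sub_self, zero_mul]
            exact zero_mem _
      · simp [hD1]
      · intro x y _ _ hx hy
        rw [hmulψ]
        exact Ideal.add_mem _ hx (Ideal.mul_mem_left _ _ hy)
      · intro x _ hx
        rw [hinvψ]
        exact Ideal.mul_mem_left _ _ (neg_mem hx)
  have hkey := key c γ hγ
  have hIc : I ^ c ≤ I := Ideal.pow_le_self (by omega)
  have haugcomp : ∀ x : MonoidAlgebra ℤ (FreeGroup (Fin n)), aug A (φ x) = aug (FreeGroup (Fin n)) x := by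
    intro x
    have hcomp : (aug A).comp φ = aug (FreeGroup (Fin n)) := by
      apply MonoidAlgebra.ringHom_ext
      · intro b
        simp [aug, hφ, indRingHom, MonoidAlgebra.lift_single]
      · intro g
        simp [aug, hφ, indRingHom, MonoidAlgebra.lift_single]
    exact congrFun (congrArg DFunLike.coe hcomp) x
  intro i
  have hmem : φ (D i γ) ∈ I := hIc (hkey i)
  have haug0 : aug A (φ (D i γ)) = 0 := by
    have := hmem
    simpa [hI, augIdeal, RingHom.mem_ker] using this
  have haug0' : aug (FreeGroup (Fin n)) (D i γ) = 0 := by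
    rw [← haugcomp]; exact haug0
  constructor
  · rw [haug0]
    simpa using hkey i
  · rw [haug0']
    simpa using hkey i
end

section
/- Let G be an abelian group with augmentation ideal I ⊂ ℤ[G], and let h₁,…,h_d be commuting 'column perturbations' of an n×n matrix Δ over ℤ[G]: for σ ∈ {0,1}^d let Δ_σ be a matrix whose (i,j) entry equals Δ_{ij} + Σ_{k: σ_k=1, j∈J_k} δ^k_{ij} where the index sets J₁,…,J_d ⊆ {1,…,n} are pairwise disjoint and each δ^k_{ij} ∈ I. Then the alternating sum Σ_{σ∈{0,1}^d} (−1)^{|σ|} det(Δ_σ) lies in I^d. -/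
open MonoidAlgebra

section Aux
variable {R : Type*} [CommRing R]

lemma prod_mem_pow' {ι : Type*} (P : Ideal R) (S : Finset ι) (f : ι → R)
    (h : ∀ i ∈ S, f i ∈ P) : ∏ i ∈ S, f i ∈ P ^ S.card := by
  induction S using Finset.cons_induction with
  | empty => simp
  | cons a S ha ih =>
    rw [Finset.prod_cons, Finset.card_cons, pow_succ']
    exact Ideal.mul_mem_mul (h a (Finset.mem_cons_self a S))
      (ih fun i hi => h i (Finset.mem_cons.2 (Or.inr hi)))

lemma det_mem_pow_rows {m : ℕ} (P : Ideal R) (M : Matrix (Fin m) (Fin m) R)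
    (S : Finset (Fin m)) (h : ∀ j ∈ S, ∀ i, M j i ∈ P) : M.det ∈ P ^ S.card := by
  rw [Matrix.det_apply]
  refine Ideal.sum_mem _ fun σ _ => ?_
  have hp : ∏ i, M (σ i) i ∈ P ^ S.card := by
    have hcard : (S.map (Equiv.toEmbedding σ⁻¹)).card = S.card := Finset.card_map _
    rw [← hcard, ← Finset.prod_mul_prod_compl (S.map (Equiv.toEmbedding σ⁻¹))]
    refine Ideal.mul_mem_right _ _ (prod_mem_pow' _ _ _ ?_)
    intro i hi
    simp only [Finset.mem_map, Equiv.toEmbedding_apply] at hi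
    obtain ⟨j, hj, rfl⟩ := hi
    simpa using h j hj (σ⁻¹ j)
  obtain hs | hs := Int.units_eq_one_or (Equiv.Perm.sign σ)
  · simpa [hs] using hp
  · simpa [hs] using neg_mem hp

lemma sum_superset_neg_one_pow {d : ℕ} (K : Finset (Fin d)) :
    ∑ σ : Finset (Fin d), (if K ⊆ σ then ((-1 : R)) ^ σ.card else 0)
      = if K = Finset.univ then (-1 : R) ^ d else 0 := by
  classical
  rw [← Finset.sum_filter]
  have step : ∑ σ ∈ Finset.univ.filter (fun σ => K ⊆ σ), (-1 : R) ^ σ.card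
      = ∑ τ ∈ Kᶜ.powerset, (-1 : R) ^ (K.card + τ.card) := by
    refine Finset.sum_nbij' (fun σ => σ \ K) (fun τ => K ∪ τ) ?_ ?_ ?_ ?_ ?_
    · intro σ hσ
      simp only [Finset.mem_filter] at hσ
      simp only [Finset.mem_powerset]
      intro x hx
      simp only [Finset.mem_sdiff] at hx
      simpa using hx.2
    · intro τ hτ
      simp [Finset.subset_union_left]
    · intro σ hσ
      simp only [Finset.mem_filter] at hσ
      exact Finset.union_sdiff_of_subset hσ.2
    · intro τ hτ
      simp only [Finset.mem_powerset] at hτ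
      show (K ∪ τ) \ K = τ
      rw [Finset.union_sdiff_cancel_left]
      rw [Finset.disjoint_left]
      intro x hx hx2
      exact (Finset.mem_compl.mp (hτ hx2)) hx
    · intro σ hσ
      simp only [Finset.mem_filter] at hσ
      have hc := Finset.card_le_card hσ.2
      congr 1
      rw [Finset.card_sdiff_of_subset hσ.2]
      omega
  rw [step]
  have : ∑ τ ∈ Kᶜ.powerset, (-1 : R) ^ (K.card + τ.card)
      = (-1 : R) ^ K.card * ∑ τ ∈ Kᶜ.powerset, (-1 : R) ^ τ.card := by
    rw [Finset.mul_sum]; exact Finset.sum_congr rfl fun τ _ => by rw [pow_add]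
  rw [this]
  have hz : ∑ τ ∈ Kᶜ.powerset, (-1 : R) ^ τ.card = if Kᶜ = ∅ then 1 else 0 := by
    have h1 : ((∑ τ ∈ Kᶜ.powerset, (-1 : ℤ) ^ τ.card : ℤ) : R)
        = ∑ τ ∈ Kᶜ.powerset, (-1 : R) ^ τ.card := by push_cast; rfl
    rw [← h1, Finset.sum_powerset_neg_one_pow_card]
    split <;> simp
  rw [hz]
  by_cases hK : K = Finset.univ
  · have hc : Kᶜ = ∅ := by simp [hK]
    simp [hK, hc, Finset.card_univ]
  · have hc : Kᶜ ≠ ∅ := by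
      intro h
      exact hK (by simpa [Finset.compl_eq_empty_iff] using h)
    simp [hK, hc]
end Aux

/-- let `G` be an abelian group with augmentation ideal
`I ⊆ ℤ[G]`, let `Δ` be an `m×m` matrix over `ℤ[G]`, and let `J₁,…,J_d` be
pairwise disjoint sets of column indices with perturbations `δ^k_{ij} ∈ I`. For
`σ ⊆ {1,…,d}` let `Δ_σ` be the matrix with entries
`Δ_{ij} + Σ_{k ∈ σ, j ∈ J_k} δ^k_{ij}`. Then the alternating sum
`Σ_σ (−1)^{|σ|} det(Δ_σ)` lies in `I^d`. -/
theorem stmt17 (G : Type*) [CommGroup G] (m d : ℕ)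
    (Δ : Matrix (Fin m) (Fin m) (MonoidAlgebra ℤ G))
    (J : Fin d → Finset (Fin m))
    (hJ : ∀ k l : Fin d, k ≠ l → Disjoint (J k) (J l))
    (δ : Fin d → Fin m → Fin m → MonoidAlgebra ℤ G)
    (hδ : ∀ k i j, δ k i j ∈ augIdeal G) :
    ∑ σ : Finset (Fin d),
      (-1 : MonoidAlgebra ℤ G) ^ σ.card *
        Matrix.det (Matrix.of fun i j =>
          Δ i j + ∑ k ∈ σ.filter (fun k => j ∈ J k), δ k i j)
      ∈ augIdeal G ^ d := by
  classical
  open Matrix in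
  let f : MultilinearMap (MonoidAlgebra ℤ G) (fun _ : Fin m => (Fin m → MonoidAlgebra ℤ G)) (MonoidAlgebra ℤ G) :=
    (Matrix.detRowAlternating (n := Fin m) (R := MonoidAlgebra ℤ G)).toMultilinearMap
  let a : Fin m → Fin m → MonoidAlgebra ℤ G := fun j i => Δ i j
  let b : Finset (Fin d) → Fin m → Fin m → MonoidAlgebra ℤ G :=
    fun σ j i => ∑ k ∈ σ.filter (fun k => j ∈ J k), δ k i j
  have huniq : ∀ (j : Fin m) (k k' : Fin d), j ∈ J k → j ∈ J k' → k = k' := by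
    intro j k k' hk hk'
    by_contra hne
    exact Finset.disjoint_left.mp (hJ k k' hne) hk hk'
  -- expansion of each determinant by multilinearity
  have expand : ∀ σ : Finset (Fin d),
      Matrix.det (Matrix.of fun i j =>
          Δ i j + ∑ k ∈ σ.filter (fun k => j ∈ J k), δ k i j)
        = ∑ T : Finset (Fin m), f (T.piecewise (b σ) a) := by
    intro σ
    rw [← Matrix.det_transpose]
    have h1 : Matrix.transpose (Matrix.of fun i j =>
          Δ i j + ∑ k ∈ σ.filter (fun k => j ∈ J k), δ k i j)
        = Matrix.of fun j i => (b σ + a) j i := by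
      ext j i
      simp only [Matrix.transpose_apply, Matrix.of_apply, Pi.add_apply, a, b]
      ring_nf
    rw [h1]
    have h2 : Matrix.det (Matrix.of fun j i => (b σ + a) j i) = f (b σ + a) := rfl
    rw [h2, f.map_add_univ (b σ) a]
  -- the set of perturbation indices hitting T
  let K : Finset (Fin m) → Finset (Fin d) :=
    fun T => Finset.univ.filter (fun k => ∃ j ∈ T, j ∈ J k)
  have hpiece : ∀ (T : Finset (Fin m)) (σ : Finset (Fin d)),
      f (T.piecewise (b σ) a)
        = if K T ⊆ σ then f (T.piecewise (b Finset.univ) a) else 0 := by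
    intro T σ
    by_cases hsub : K T ⊆ σ
    · rw [if_pos hsub]
      congr 1
      funext j
      by_cases hj : j ∈ T
      · rw [Finset.piecewise_eq_of_mem _ _ _ hj, Finset.piecewise_eq_of_mem _ _ _ hj]
        have hfil : σ.filter (fun k => j ∈ J k)
            = Finset.univ.filter (fun k => j ∈ J k) := by
          apply Finset.ext
          intro k'
          simp only [Finset.mem_filter, Finset.mem_univ, true_and]
          refine ⟨fun h => h.2, fun h => ⟨?_, h⟩⟩
          have hkK : k' ∈ K T := by
            simp only [K, Finset.mem_filter, Finset.mem_univ, true_and]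
            exact ⟨j, hj, h⟩
          exact hsub hkK
        show (b σ) j = (b Finset.univ) j
        simp only [b]
        funext i
        rw [hfil]
      · rw [Finset.piecewise_eq_of_notMem _ _ _ hj, Finset.piecewise_eq_of_notMem _ _ _ hj]
    · rw [if_neg hsub]
      obtain ⟨k, hkK, hkσ⟩ := Finset.not_subset.mp hsub
      simp only [K, Finset.mem_filter, Finset.mem_univ, true_and] at hkK
      obtain ⟨j, hjT, hjk⟩ := hkK
      have hrow : T.piecewise (b σ) a j = 0 := by
        rw [Finset.piecewise_eq_of_mem _ _ _ hjT]
        have : σ.filter (fun k => j ∈ J k) = ∅ := by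
          apply Finset.eq_empty_of_forall_notMem
          intro k' hk'
          simp only [Finset.mem_filter] at hk'
          exact hkσ (huniq j k' k hk'.2 hjk ▸ hk'.1)
        show (b σ) j = 0
        simp only [b]
        funext i
        rw [this]
        simp
      exact f.map_coord_zero j hrow
  -- rewrite the total sum
  have htotal : ∑ σ : Finset (Fin d),
      (-1 : MonoidAlgebra ℤ G) ^ σ.card *
        Matrix.det (Matrix.of fun i j =>
          Δ i j + ∑ k ∈ σ.filter (fun k => j ∈ J k), δ k i j)
      = ∑ T : Finset (Fin m),
          (if K T = Finset.univ then (-1 : MonoidAlgebra ℤ G) ^ d else 0) *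
            f (T.piecewise (b Finset.univ) a) := by
    calc ∑ σ : Finset (Fin d), (-1 : MonoidAlgebra ℤ G) ^ σ.card *
            Matrix.det (Matrix.of fun i j =>
              Δ i j + ∑ k ∈ σ.filter (fun k => j ∈ J k), δ k i j)
        = ∑ σ : Finset (Fin d), ∑ T : Finset (Fin m),
            (-1 : MonoidAlgebra ℤ G) ^ σ.card * f (T.piecewise (b σ) a) := by
          refine Finset.sum_congr rfl fun σ _ => ?_
          rw [expand σ, Finset.mul_sum]
      _ = ∑ T : Finset (Fin m), ∑ σ : Finset (Fin d),
            (-1 : MonoidAlgebra ℤ G) ^ σ.card * f (T.piecewise (b σ) a) := Finset.sum_comm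
      _ = ∑ T : Finset (Fin m),
            (if K T = Finset.univ then (-1 : MonoidAlgebra ℤ G) ^ d else 0) *
              f (T.piecewise (b Finset.univ) a) := by
          refine Finset.sum_congr rfl fun T _ => ?_
          have : ∑ σ : Finset (Fin d),
              (-1 : MonoidAlgebra ℤ G) ^ σ.card * f (T.piecewise (b σ) a)
              = (∑ σ : Finset (Fin d), if K T ⊆ σ then (-1 : MonoidAlgebra ℤ G) ^ σ.card else 0) *
                  f (T.piecewise (b Finset.univ) a) := by
            rw [Finset.sum_mul]
            refine Finset.sum_congr rfl fun σ _ => ?_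
            rw [hpiece T σ]
            split <;> simp
          rw [this, sum_superset_neg_one_pow]
  rw [htotal]
  refine Ideal.sum_mem _ fun T _ => ?_
  by_cases hKT : K T = Finset.univ
  · rw [if_pos hKT]
    refine Ideal.mul_mem_left _ _ ?_
    -- choose a representative in T ∩ J k for each k
    have hex : ∀ k : Fin d, ∃ j ∈ T, j ∈ J k := by
      intro k
      have : k ∈ K T := hKT ▸ Finset.mem_univ k
      simpa only [K, Finset.mem_filter, Finset.mem_univ, true_and] using this
    have hcard : d ≤ T.card := by
      choose g hgT hgJ using hex
      have hinj : Set.InjOn g ↑(Finset.univ : Finset (Fin d)) := by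
        intro k _ k' _ h
        exact huniq (g k) k k' (hgJ k) (h ▸ hgJ k')
      have := Finset.card_le_card_of_injOn g (fun k _ => hgT k) hinj
      simpa using this
    have hdet : f (T.piecewise (b Finset.univ) a)
        = Matrix.det (Matrix.of (T.piecewise (b Finset.univ) a)) := rfl
    rw [hdet]
    have hmem : Matrix.det (Matrix.of (T.piecewise (b Finset.univ) a)) ∈ augIdeal G ^ T.card := by
      refine det_mem_pow_rows (augIdeal G) _ T fun j hj i => ?_
      show T.piecewise (b Finset.univ) a j i ∈ augIdeal G
      rw [Finset.piecewise_eq_of_mem _ _ _ hj]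
      exact Ideal.sum_mem _ fun k _ => hδ k i j
    exact Ideal.pow_le_pow_right hcard hmem
  · rw [if_neg hKT, zero_mul]
    exact zero_mem _
end
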